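/- arXiv:1707.03194 — 6 statements merged into one kernel-verified Lean document; each statement's English description precedes it below -/
import Mathlib

section
/- Let 𝒮 be a stratification of a set D ⊆ ℝ^N and let x ∈ D. Then there exists δ > 0 such that the following three collections of strata coincide: (a) the collection {M_{x'} : x' ∈ D, ‖x' − x‖ < δ} of strata containing points of D within distance δ of x; (b) the collection of strata M ∈ 𝒮 with M ≥ M_x; (c) the collection of strata of 𝒮 that are active at x. -/
open Filter Topology Set Pointwise

noncomputable section

variable {E : Type*} [NormedAddCommGroup E] [InnerProductSpace ℝ E]

/-- The convex subdifferential of an `EReal`-valued function. -/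
def subdiff (R : E → EReal) (x : E) : Set E :=
  {u | ∀ y, R x + ((inner ℝ u (y - x) : ℝ) : EReal) ≤ R y}

/-- The Legendre–Fenchel conjugate. -/
def fenchel (R : E → EReal) (u : E) : EReal :=
  ⨆ x, ((inner ℝ u x : ℝ) : EReal) - R x

/-- Domain of the subdifferential. -/
def domSubdiff (R : E → EReal) : Set E := {x | (subdiff R x).Nonempty}

/-- A proper extended-real-valued function. -/
def ProperFn (R : E → EReal) : Prop := (∀ x, R x ≠ ⊥) ∧ ∃ x, R x ≠ ⊤

/-- Convexity of an extended-real-valued function, via its epigraph. -/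
def ConvexFn (R : E → EReal) : Prop :=
  Convex ℝ {p : E × ℝ | R p.1 ≤ (p.2 : EReal)}

/-- Proper, convex and lower semicontinuous. -/
def ProperConvexLsc (R : E → EReal) : Prop :=
  ProperFn R ∧ ConvexFn R ∧ LowerSemicontinuous R

/-- The correspondence operator `𝒥_R`. -/
def corrOp (R : E → EReal) (S : Set E) : Set E :=
  ⋃ x ∈ S, intrinsicInterior ℝ (subdiff R x)

/-- The partial order on strata: `M ≤ M' ⟺ M ⊆ cl M'`. -/
def stratLE (M M' : Set E) : Prop := M ⊆ closure M'

/-- A stratification of `D`: a finite partition into nonempty strata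
satisfying the frontier condition. -/
structure IsStratification (D : Set E) (S : Set (Set E)) : Prop where
  finite : S.Finite
  nonempty : ∀ M ∈ S, M.Nonempty
  cover : ⋃₀ S = D
  pairwiseDisjoint : ∀ M ∈ S, ∀ M' ∈ S, M ≠ M' → Disjoint M M'
  frontier_cond : ∀ M ∈ S, ∀ M' ∈ S, (M ∩ closure M').Nonempty → M ⊆ closure M'

/-- `R` is mirror-stratifiable with respect to a primal stratification `S` of
`dom ∂R` and a dual stratification `Sd` of `dom ∂R*`. -/
structure IsMirrorStratifiable (R : E → EReal) (S Sd : Set (Set E)) : Prop where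
  primal : IsStratification (domSubdiff R) S
  dual : IsStratification (domSubdiff (fenchel R)) Sd
  maps_primal : ∀ M ∈ S, corrOp R M ∈ Sd
  maps_dual : ∀ Md ∈ Sd, corrOp (fenchel R) Md ∈ S
  pairing : ∀ M ∈ S, ∀ Md ∈ Sd, (corrOp R M = Md ↔ corrOp (fenchel R) Md = M)
  decreasing : ∀ M ∈ S, ∀ M' ∈ S, (stratLE M M' ↔ stratLE (corrOp R M') (corrOp R M))

theorem Set.Finite.eventually_mem_imp_mem_closure {X : Type*} [TopologicalSpace X]
    {S : Set (Set X)} (hS : S.Finite) (x : X) :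
    ∀ᶠ y in 𝓝 x, ∀ M ∈ S, y ∈ M → x ∈ closure M := by
  refine (eventually_all_finite hS).2 fun M _ => ?_
  by_cases hx : x ∈ closure M
  · exact .of_forall fun _ _ => hx
  · filter_upwards [isClosed_closure.isOpen_compl.mem_nhds hx] with y hy hyM
    exact absurd (subset_closure hyM) hy

namespace IsStratification

variable {X : Type*} [NormedAddCommGroup X] {D : Set X} {S : Set (Set X)}

theorem subset_of_mem (hS : IsStratification D S) {M : Set X} (hM : M ∈ S) : M ⊆ D :=
  hS.cover ▸ subset_sUnion_of_mem hM

theorem stratLE_iff_mem_closure (hS : IsStratification D S) {Mx M : Set X} {x : X}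
    (hMx : Mx ∈ S) (hxMx : x ∈ Mx) (hM : M ∈ S) : stratLE Mx M ↔ x ∈ closure M :=
  ⟨fun h => h hxMx, fun hx => hS.frontier_cond Mx hMx M hM ⟨x, hxMx, hx⟩⟩

end IsStratification

theorem strata_active_characterization_general
    {N : ℕ} (D : Set (EuclideanSpace ℝ (Fin N)))
    (S : Set (Set (EuclideanSpace ℝ (Fin N))))
    (hS : IsStratification D S)
    (x : EuclideanSpace ℝ (Fin N))
    (Mx : Set (EuclideanSpace ℝ (Fin N))) (hMx : Mx ∈ S) (hxMx : x ∈ Mx) :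
    ∃ δ > (0:ℝ), ∀ M ∈ S,
      ((∃ x' ∈ D, dist x' x < δ ∧ x' ∈ M) ↔ stratLE Mx M) ∧
      ((∃ x' ∈ D, dist x' x < δ ∧ x' ∈ M) ↔ x ∈ closure M) := by
  obtain ⟨δ, hδ, hball⟩ :=
    Metric.eventually_nhds_iff_ball.1 (hS.finite.eventually_mem_imp_mem_closure x)
  refine ⟨δ, hδ, fun M hM => ?_⟩
  have hnear : (∃ x' ∈ D, dist x' x < δ ∧ x' ∈ M) ↔ x ∈ closure M := by
    refine ⟨fun ⟨x', _, hx'x, hx'M⟩ => hball x' hx'x M hM hx'M, fun hx => ?_⟩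
    obtain ⟨x', hx'M, hxx'⟩ := Metric.mem_closure_iff.1 hx δ hδ
    exact ⟨x', hS.subset_of_mem hM hx'M, dist_comm x x' ▸ hxx', hx'M⟩
  rw [hS.stratLE_iff_mem_closure hMx hxMx hM]
  exact ⟨hnear, hnear⟩

/-- Proposition 2.1: given a stratification `S` of `D` and `x ∈ D`,
there is `δ > 0` such that the strata met by points of `D` at distance `< δ` from `x`,
the strata `M ≥ M_x`, and the strata active at `x`, all coincide. -/
theorem strata_active_characterization
    {N : ℕ} (D : Set (EuclideanSpace ℝ (Fin N)))
    (S : Set (Set (EuclideanSpace ℝ (Fin N))))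
    (hS : IsStratification D S)
    (x : EuclideanSpace ℝ (Fin N)) (hxD : x ∈ D)
    (Mx : Set (EuclideanSpace ℝ (Fin N))) (hMx : Mx ∈ S) (hxMx : x ∈ Mx) :
    ∃ δ > (0:ℝ), ∀ M ∈ S,
      ((∃ x' ∈ D, dist x' x < δ ∧ x' ∈ M) ↔ stratLE Mx M) ∧
      ((∃ x' ∈ D, dist x' x < δ ∧ x' ∈ M) ↔ x ∈ closure M) :=
  strata_active_characterization_general D S hS x Mx hMx hxMx

end
end

section
/- Let R: ℝ^N → ℝ ∪ {+∞} be a proper lower semicontinuous convex function that is mirror-stratifiable with respect to primal–dual stratifications (𝒮, 𝒮*). Let (x̄, ū) ∈ ℝ^N × ℝ^N and let (x_k, u_k) be a sequence converging to (x̄, ū) with u_k ∈ ∂R(x_k) for every k. Then for all k sufficiently large, M_{x̄} ≤ M_{x_k} ≤ 𝒥_{R*}(M*_{ū}), where M_{x̄}, M_{x_k} ∈ 𝒮 are the strata containing x̄ and x_k, and M*_{ū} ∈ 𝒮* is the stratum containing ū. -/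
open Filter Topology Set Pointwise

noncomputable section

variable {E : Type*} [NormedAddCommGroup E] [InnerProductSpace ℝ E]

/-! If `x_k` lies in a stratum `M`, then `u_k ∈ ∂R(x_k) ⊆ cl (ri ∂R(x_k)) ⊆ cl 𝒥_R(M)`. By the
frontier condition, a limit point of a stratum `M'` lies in a stratum below `M'`; as there are
finitely many strata, eventually `M_{x̄} ≤ M_{x_k}` and `M*_{ū} ≤ 𝒥_R(M_{x_k})`. Mirror
stratifiability turns the second inequality into `M_{x_k} ≤ 𝒥_{R*}(M*_{ū})`. -/

theorem Convex.subset_closure_intrinsicInterior {V : Type*} [NormedAddCommGroup V]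
    [NormedSpace ℝ V] [FiniteDimensional ℝ V] {s : Set V} (hs : Convex ℝ s) :
    s ⊆ closure (intrinsicInterior ℝ s) := by
  intro w hw
  set A := affineSpan ℝ s
  let w' : A := ⟨w, subset_affineSpan ℝ s hw⟩
  have : Nonempty s := ⟨⟨w, hw⟩⟩
  -- transport `s` to a convex set `t` with nonempty interior in the direction of its span
  let φ := (AffineIsometryEquiv.constVSub ℝ w').symm
  set t : Set A.direction := φ ⁻¹' ((↑) ⁻¹' s)
  have ht : Convex ℝ t := hs.affine_preimage (A.subtype.comp φ.toAffineEquiv.toAffineMap)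
  have hint : (interior t).Nonempty := by
    rw [ht.interior_nonempty_iff_affineSpan_eq_top]
    change affineSpan ℝ (φ.toAffineEquiv ⁻¹' _) = ⊤
    rw [← AffineSubspace.comap_span, affineSpan_coe_preimage_eq_top, AffineSubspace.comap_top]
  have h0 : (0 : A.direction) ∈ closure (interior t) := by
    rw [ht.closure_interior_eq_closure_of_nonempty_interior hint]
    exact subset_closure (by simpa [t, φ] using hw)
  have hcont : Continuous (fun v => (φ v : V)) := continuous_subtype_val.comp φ.continuous
  refine closure_mono ?_ (image_closure_subset_closure_image hcont ⟨0, h0, by simp [φ, w']⟩)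
  rintro _ ⟨v, hv, rfl⟩
  exact ⟨φ v, (φ.toHomeomorph.preimage_interior _).superset hv, rfl⟩

theorem convex_subdiff (R : E → EReal) (x : E) : Convex ℝ (subdiff R x) := by
  simp only [subdiff, ofPred_forall]
  refine convex_iInter fun y => ?_
  have hlower : IsLowerSet {t : ℝ | R x + t ≤ R y} := fun a b hab hb =>
    le_trans (add_le_add_right (EReal.coe_le_coe_iff.mpr hab) _) hb
  exact hlower.ordConnected.convex.linear_preimage ((innerₗ E).flip (y - x))

theorem subdiff_subset_closure_corrOp [FiniteDimensional ℝ E] {R : E → EReal} {M : Set E}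
    {x : E} (hx : x ∈ M) : subdiff R x ⊆ closure (corrOp R M) :=
  (convex_subdiff R x).subset_closure_intrinsicInterior.trans
    (closure_mono (subset_biUnion_of_mem (u := fun x => intrinsicInterior ℝ (subdiff R x)) hx))

theorem IsStratification.eventually_stratLE {F : Type*} [NormedAddCommGroup F] {D : Set F}
    {S : Set (Set F)} (hS : IsStratification D S) {Mbar : Set F} (hMbar : Mbar ∈ S) {ybar : F}
    (hybar : ybar ∈ Mbar) {ι : Type*} {l : Filter ι} {y : ι → F} (hy : Tendsto y l (𝓝 ybar)) :
    ∀ᶠ k in l, ∀ M ∈ S, y k ∈ closure M → stratLE Mbar M := by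
  refine hS.finite.eventually_all.2 fun M hM => ?_
  by_cases h : stratLE Mbar M
  · exact .of_forall fun _ _ => h
  have hybar_notMem : ybar ∉ closure M := fun hc =>
    h (hS.frontier_cond Mbar hMbar M hM ⟨ybar, hybar, hc⟩)
  filter_upwards [hy.eventually (isClosed_closure.isOpen_compl.mem_nhds hybar_notMem)]
    with k hk hk' using absurd hk' hk

theorem IsMirrorStratifiable.stratLE_corrOp_fenchel_iff {R : E → EReal} {S Sd : Set (Set E)}
    (hms : IsMirrorStratifiable R S Sd) {M Md : Set E} (hM : M ∈ S) (hMd : Md ∈ Sd) :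
    stratLE M (corrOp (fenchel R) Md) ↔ stratLE Md (corrOp R M) := by
  have hT := hms.maps_dual Md hMd
  have hpair : corrOp R (corrOp (fenchel R) Md) = Md := (hms.pairing _ hT Md hMd).2 rfl
  rw [hms.decreasing M hM _ hT, hpair]

theorem enlarged_activity_identification_general
    {N : ℕ} (R : EuclideanSpace ℝ (Fin N) → EReal)
    (S Sd : Set (Set (EuclideanSpace ℝ (Fin N))))
    (hms : IsMirrorStratifiable R S Sd)
    (xbar ubar : EuclideanSpace ℝ (Fin N))
    (x u : ℕ → EuclideanSpace ℝ (Fin N))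
    (hx : Tendsto x atTop (𝓝 xbar)) (hu : Tendsto u atTop (𝓝 ubar))
    (hsub : ∀ k, u k ∈ subdiff R (x k))
    (Mxbar : Set (EuclideanSpace ℝ (Fin N))) (hMxbar : Mxbar ∈ S) (hxbar : xbar ∈ Mxbar)
    (Mubar : Set (EuclideanSpace ℝ (Fin N))) (hMubar : Mubar ∈ Sd) (hubar : ubar ∈ Mubar) :
    ∀ᶠ k in atTop, ∀ Mk ∈ S, x k ∈ Mk →
      stratLE Mxbar Mk ∧ stratLE Mk (corrOp (fenchel R) Mubar) := by
  filter_upwards [hms.primal.eventually_stratLE hMxbar hxbar hx,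
    hms.dual.eventually_stratLE hMubar hubar hu] with k hprimal hdual Mk hMk hxk
  have hdual_k : stratLE Mubar (corrOp R Mk) :=
    hdual _ (hms.maps_primal Mk hMk) (subdiff_subset_closure_corrOp hxk (hsub k))
  exact ⟨hprimal Mk hMk (subset_closure hxk), (hms.stratLE_corrOp_fenchel_iff hMk hMubar).2 hdual_k⟩

/-- Theorem 2.10, enlarged activity identification: if `R` is proper
lsc convex and mirror-stratifiable w.r.t. `(S, Sd)`, and `(x_k, u_k) → (x̄, ū)` with
`u_k ∈ ∂R(x_k)`, then for all large `k` the stratum of `x_k` satisfies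
`M_{x̄} ≤ M_{x_k} ≤ 𝒥_{R*}(M*_{ū})`. -/
theorem enlarged_activity_identification
    {N : ℕ} (R : EuclideanSpace ℝ (Fin N) → EReal)
    (hR : ProperConvexLsc R)
    (S Sd : Set (Set (EuclideanSpace ℝ (Fin N))))
    (hms : IsMirrorStratifiable R S Sd)
    (xbar ubar : EuclideanSpace ℝ (Fin N))
    (x u : ℕ → EuclideanSpace ℝ (Fin N))
    (hx : Tendsto x atTop (𝓝 xbar)) (hu : Tendsto u atTop (𝓝 ubar))
    (hsub : ∀ k, u k ∈ subdiff R (x k))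
    (Mxbar : Set (EuclideanSpace ℝ (Fin N))) (hMxbar : Mxbar ∈ S) (hxbar : xbar ∈ Mxbar)
    (Mubar : Set (EuclideanSpace ℝ (Fin N))) (hMubar : Mubar ∈ Sd) (hubar : ubar ∈ Mubar) :
    ∀ᶠ k in atTop, ∀ Mk ∈ S, x k ∈ Mk →
      stratLE Mxbar Mk ∧ stratLE Mk (corrOp (fenchel R) Mubar) :=
  enlarged_activity_identification_general R S Sd hms xbar ubar x u hx hu hsub Mxbar hMxbar hxbar
    Mubar hMubar hubar

end
end

section
/- The ℓ1 norm R(x) = Σ_{i=1}^N |x^i| on ℝ^N, whose Fenchel conjugate is the indicator function of the cube [−1, 1]^N, is mirror-stratifiable with respect to the stratification 𝒮 = {(−∞,0), {0}, (0,+∞)}^N of ℝ^N (products over coordinates of these three strata of ℝ) and the stratification 𝒮* = {{−1}, (−1,1), {+1}}^N of [−1, 1]^N. -/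
open Filter Topology Set Pointwise

noncomputable section

variable {E : Type*} [NormedAddCommGroup E] [InnerProductSpace ℝ E]

/-- Coordinate-wise product stratification of `ℝ^N` built from a collection of pieces of `ℝ`. -/
def coordProdStrat (pieces : Set (Set ℝ)) (N : ℕ) : Set (Set (EuclideanSpace ℝ (Fin N))) :=
  {M | ∃ s : Fin N → Set ℝ, (∀ i, s i ∈ pieces) ∧ M = {x | ∀ i, x i ∈ s i}}

/-!
Everything splits over coordinates. The subdifferential of `R x = ∑ i, |x i|` is the product of
the subdifferentials of `|·|` at the coordinates, and `R*` is the indicator of the cube, whose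
subdifferential is the product of the normal cones of `[-1, 1]`. Closures, relative interiors and
unions of boxes are computed coordinatewise, so a product of one-dimensional mirror
stratifications is again one. In dimension one, `|·|` matches `(-∞, 0)`, `{0}`, `(0, ∞)` with
`{-1}`, `(-1, 1)`, `{1}`: the subdifferential is constant on each stratum, its relative interior is
the partner stratum, and the middle stratum, the smallest on the primal side, is the largest on
the dual side.
-/

section IntrinsicInterior

variable {𝕜 V P : Type*} [Ring 𝕜] [AddCommGroup V] [Module 𝕜 V] [TopologicalSpace P]
  [AddTorsor V P]

theorem intrinsicInterior_eq_interior_of_affineSpan_eq_top {s : Set P}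
    (h : affineSpan 𝕜 s = ⊤) : intrinsicInterior 𝕜 s = interior s := by
  have hspan : (affineSpan 𝕜 s : Set P) = univ := by rw [h]; rfl
  have hval : IsHomeomorph (Subtype.val : affineSpan 𝕜 s → P) :=
    ⟨continuous_subtype_val, (hspan ▸ isOpen_univ : IsOpen _).isOpenMap_subtype_val,
      Subtype.val_injective, fun x => ⟨⟨x, by rw [h]; exact AffineSubspace.mem_top 𝕜 V x⟩, rfl⟩⟩
  rw [intrinsicInterior, hval.image_interior, hval.surjective.image_preimage]

theorem intrinsicInterior_eq_interior {F : Type*} [NormedAddCommGroup F] [NormedSpace ℝ F]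
    {s : Set F} (h : (interior s).Nonempty) : intrinsicInterior ℝ s = interior s :=
  intrinsicInterior_eq_interior_of_affineSpan_eq_top <|
    affineSpan_eq_top_of_nonempty_interior (h.mono (interior_mono (subset_convexHull ℝ s)))

theorem intrinsicInterior_univ_pi {F : Type*} [AddCommGroup F] [Module 𝕜 F] [TopologicalSpace F] :
    ∀ {n : ℕ} (s : Fin n → Set F),
      intrinsicInterior 𝕜 (univ.pi s) = univ.pi fun i => intrinsicInterior 𝕜 (s i)
  | 0, _ => by
    have hpi : ∀ t : Fin 0 → Set F, univ.pi t = {0} := fun t => by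
      ext x; simp [Subsingleton.elim x 0]
    rw [hpi, hpi, intrinsicInterior_singleton]
  | n + 1, s => by
    let e := (Fin.consEquivL 𝕜 fun _ : Fin (n + 1) => F).toContinuousAffineEquiv
    have hcons (t : Fin (n + 1) → Set F) :
        univ.pi t = e '' (t 0 ×ˢ univ.pi fun i => t i.succ) := by
      ext x
      refine ⟨fun hx => ⟨(x 0, Fin.tail x), ⟨hx 0 trivial, fun i _ => hx i.succ trivial⟩,
        Fin.cons_self_tail x⟩, ?_⟩
      rintro ⟨⟨a, v⟩, ⟨ha, hv⟩, rfl⟩ i -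
      exact Fin.cases ha (fun j => hv j trivial) i
    rw [hcons, hcons, ContinuousAffineEquiv.intrinsicInterior_image, intrinsicInterior_prod_eq,
      intrinsicInterior_univ_pi]

end IntrinsicInterior

section CoordBox

variable {N : ℕ}

def coordBox (s : Fin N → Set ℝ) : Set (EuclideanSpace ℝ (Fin N)) := {x | ∀ i, x i ∈ s i}

theorem coordBox_eq_preimage_pi (s : Fin N → Set ℝ) :
    coordBox s = PiLp.continuousLinearEquiv 2 ℝ (fun _ => ℝ) ⁻¹' univ.pi s := by
  ext x; simp [coordBox]

theorem coordBox_eq_image_pi (s : Fin N → Set ℝ) :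
    coordBox s =
      (PiLp.continuousLinearEquiv 2 ℝ (fun _ => ℝ)).symm.toContinuousAffineEquiv '' univ.pi s := by
  rw [coordBox_eq_preimage_pi, ContinuousLinearEquiv.coe_toContinuousAffineEquiv,
    ContinuousLinearEquiv.image_symm_eq_preimage]

theorem closure_coordBox (s : Fin N → Set ℝ) :
    closure (coordBox s) = coordBox fun i => closure (s i) := by
  rw [coordBox_eq_preimage_pi, coordBox_eq_preimage_pi, ← closure_pi_set]
  exact ((PiLp.continuousLinearEquiv 2 ℝ (fun _ : Fin N => ℝ)).toHomeomorph.preimage_closure _).symm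

theorem intrinsicInterior_coordBox (s : Fin N → Set ℝ) :
    intrinsicInterior ℝ (coordBox s) = coordBox fun i => intrinsicInterior ℝ (s i) := by
  rw [coordBox_eq_image_pi, coordBox_eq_image_pi, ContinuousAffineEquiv.intrinsicInterior_image,
    intrinsicInterior_univ_pi]

theorem coordBox_nonempty_iff {s : Fin N → Set ℝ} :
    (coordBox s).Nonempty ↔ ∀ i, (s i).Nonempty := by
  rw [coordBox_eq_preimage_pi, (PiLp.continuousLinearEquiv 2 ℝ _).surjective.nonempty_preimage,
    univ_pi_nonempty_iff]

theorem coordBox_subset_coordBox_iff {s t : Fin N → Set ℝ} (hs : ∀ i, (s i).Nonempty) :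
    coordBox s ⊆ coordBox t ↔ ∀ i, s i ⊆ t i := by
  rw [coordBox_eq_preimage_pi, coordBox_eq_preimage_pi,
    preimage_subset_preimage_iff (by simp [(PiLp.continuousLinearEquiv 2 ℝ _).surjective.range_eq]),
    univ_pi_subset_univ_pi_iff]
  exact or_iff_left fun ⟨i, hi⟩ => (hs i).ne_empty hi

theorem coordBox_inj {s t : Fin N → Set ℝ} (hs : ∀ i, (s i).Nonempty) (ht : ∀ i, (t i).Nonempty) :
    coordBox s = coordBox t ↔ s = t := by
  refine ⟨fun h => ?_, congrArg coordBox⟩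
  rw [subset_antisymm_iff, coordBox_subset_coordBox_iff hs, coordBox_subset_coordBox_iff ht] at h
  exact funext fun i => subset_antisymm (h.1 i) (h.2 i)

theorem biUnion_coordBox (s : Fin N → Set ℝ) (g : Fin N → ℝ → Set ℝ) :
    ⋃ x ∈ coordBox s, coordBox (fun i => g i (x i)) = coordBox fun i => ⋃ t ∈ s i, g i t := by
  ext u
  simp only [mem_iUnion, coordBox, exists_prop]
  refine ⟨fun ⟨x, hx, hu⟩ i => ⟨x i, hx i, hu i⟩, fun hu => ?_⟩
  choose t ht hut using hu
  exact ⟨WithLp.toLp 2 t, ht, hut⟩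

end CoordBox

section Stratification

open Function

theorem Pairwise.injective_of_nonempty {ι α : Type*} {f : ι → Set α}
    (hd : Pairwise (Disjoint on f)) (hne : ∀ i, (f i).Nonempty) : f.Injective :=
  fun i j hij => by_contra fun h =>
    (hne j).ne_empty (disjoint_self.1 (by simpa [onFun, hij] using hd h))

theorem mem_coordProdStrat {S : Set (Set ℝ)} {N : ℕ} {M : Set (EuclideanSpace ℝ (Fin N))} :
    M ∈ coordProdStrat S N ↔ ∃ s : Fin N → Set ℝ, (∀ i, s i ∈ S) ∧ M = coordBox s :=
  Iff.rfl

theorem isStratification_range {F ι : Type*} [NormedAddCommGroup F] [Finite ι] {P : ι → Set F}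
    (hne : ∀ i, (P i).Nonempty) (hdisj : Pairwise (Disjoint on P))
    (hfront : ∀ i j, (P i ∩ closure (P j)).Nonempty → P i ⊆ closure (P j)) :
    IsStratification (⋃ i, P i) (range P) where
  finite := finite_range P
  nonempty := forall_mem_range.2 hne
  cover := sUnion_range P
  pairwiseDisjoint := by
    rintro _ ⟨i, rfl⟩ _ ⟨j, rfl⟩ hij
    exact hdisj (ne_of_apply_ne P hij)
  frontier_cond := by
    rintro _ ⟨i, rfl⟩ _ ⟨j, rfl⟩
    exact hfront i j

theorem IsStratification.coordProd {D : Set ℝ} {S : Set (Set ℝ)} (h : IsStratification D S)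
    (N : ℕ) : IsStratification (coordBox fun _ : Fin N => D) (coordProdStrat S N) where
  finite := by
    have := h.finite.to_subtype
    refine (finite_range fun s : Fin N → S => coordBox fun i => (s i : Set ℝ)).subset ?_
    rintro _ ⟨s, hs, rfl⟩
    exact ⟨fun i => ⟨s i, hs i⟩, rfl⟩
  nonempty := by
    rintro _ ⟨s, hs, rfl⟩
    exact coordBox_nonempty_iff.2 fun i => h.nonempty _ (hs i)
  cover := by
    ext x
    refine ⟨fun ⟨_, ⟨s, hs, hM⟩, hx⟩ i => h.cover ▸ mem_sUnion_of_mem ((hM ▸ hx) i) (hs i),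
      fun hx => ?_⟩
    choose s hs hxs using fun i => (h.cover ▸ hx i : x i ∈ ⋃₀ S)
    exact ⟨coordBox s, ⟨s, hs, rfl⟩, hxs⟩
  pairwiseDisjoint := by
    intro M hM M' hM' hne
    obtain ⟨s, hs, rfl⟩ := mem_coordProdStrat.1 hM
    obtain ⟨t, ht, rfl⟩ := mem_coordProdStrat.1 hM'
    obtain ⟨i, hi⟩ := Function.ne_iff.1 (ne_of_apply_ne coordBox hne)
    exact disjoint_left.2 fun x hxs hxt =>
      disjoint_left.1 (h.pairwiseDisjoint _ (hs i) _ (ht i) hi) (hxs i) (hxt i)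
  frontier_cond := by
    intro M hM M' hM' ⟨x, hxM, hxM'⟩
    obtain ⟨s, hs, rfl⟩ := mem_coordProdStrat.1 hM
    obtain ⟨t, ht, rfl⟩ := mem_coordProdStrat.1 hM'
    rw [closure_coordBox] at hxM' ⊢
    exact fun y hy i => h.frontier_cond _ (hs i) _ (ht i) ⟨x i, hxM i, hxM' i⟩ (hy i)

end Stratification

section Subdifferential

open Classical in
def convexIndicator (C : Set E) (x : E) : EReal := if x ∈ C then 0 else ⊤

theorem mem_subdiff_coe_iff {f : E → ℝ} {x u : E} :
    u ∈ subdiff (fun y => (f y : EReal)) x ↔ ∀ y, f x + inner ℝ u (y - x) ≤ f y := by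
  simp only [subdiff, mem_ofPred_eq, ← EReal.coe_add, EReal.coe_le_coe_iff]

theorem mem_subdiff_convexIndicator_iff {C : Set E} {x u : E} (hx : x ∈ C) :
    u ∈ subdiff (convexIndicator C) x ↔ ∀ y ∈ C, inner ℝ u (y - x) ≤ 0 := by
  refine forall_congr' fun y => ?_
  by_cases hy : y ∈ C <;> simp [convexIndicator, hx, hy]

theorem subdiff_convexIndicator_of_notMem {C : Set E} (hC : C.Nonempty) {x : E} (hx : x ∉ C) :
    subdiff (convexIndicator C) x = ∅ := by
  refine eq_empty_of_forall_notMem fun u hu => ?_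
  obtain ⟨y, hy⟩ := hC
  simpa [convexIndicator, hx, hy] using hu y

theorem domSubdiff_convexIndicator {C : Set E} (hC : C.Nonempty) :
    domSubdiff (convexIndicator C) = C := by
  ext x
  refine ⟨fun ⟨u, hu⟩ => by_contra fun hx => ?_, fun hx => ⟨0, ?_⟩⟩
  · rwa [subdiff_convexIndicator_of_notMem hC hx] at hu
  · simp [mem_subdiff_convexIndicator_iff hx]

theorem fenchel_coe_eq_convexIndicator {f : E → ℝ} {C : Set E} (hf : f 0 = 0)
    (hle : ∀ u ∈ C, ∀ x, inner ℝ u x ≤ f x)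
    (hunbdd : ∀ u ∉ C, ∀ M : ℝ, ∃ x, M < inner ℝ u x - f x) :
    fenchel (fun x => (f x : EReal)) = convexIndicator C := by
  funext u
  by_cases hu : u ∈ C
  · rw [convexIndicator, if_pos hu]
    refine le_antisymm (iSup_le fun x => ?_) (le_iSup_of_le 0 (by simp [hf]))
    rw [← EReal.coe_sub, EReal.coe_nonpos, sub_nonpos]
    exact hle u hu x
  · rw [convexIndicator, if_neg hu, EReal.eq_top_iff_forall_lt]
    intro M
    obtain ⟨x, hx⟩ := hunbdd u hu M
    refine (EReal.coe_lt_coe_iff.2 hx).trans_le ?_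
    rw [EReal.coe_sub]
    exact le_iSup (fun x => (inner ℝ u x : EReal) - f x) x

theorem inner_le_norm_of_norm_le_one {u : E} (hu : ‖u‖ ≤ 1) (x : E) : inner ℝ u x ≤ ‖x‖ :=
  (real_inner_le_norm u x).trans (mul_le_of_le_one_left (norm_nonneg x) hu)

theorem exists_lt_inner_sub_norm {u : E} (hu : 1 < ‖u‖) (M : ℝ) :
    ∃ x, M < inner ℝ u x - ‖x‖ := by
  have hpos : 0 < ‖u‖ * (‖u‖ - 1) := by nlinarith
  set c := (|M| + 1) / (‖u‖ * (‖u‖ - 1))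
  have hc : 0 < c := by positivity
  refine ⟨c • u, ?_⟩
  have hval : inner ℝ u (c • u) - ‖c • u‖ = |M| + 1 := by
    rw [real_inner_smul_right, real_inner_self_eq_norm_sq, norm_smul, Real.norm_of_nonneg hc.le]
    calc c * ‖u‖ ^ 2 - c * ‖u‖ = c * (‖u‖ * (‖u‖ - 1)) := by ring
      _ = |M| + 1 := div_mul_cancel₀ _ hpos.ne'
  linarith [le_abs_self M]

theorem fenchel_norm :
    fenchel (fun x : E => (‖x‖ : EReal)) = convexIndicator (Metric.closedBall 0 1) :=
  fenchel_coe_eq_convexIndicator norm_zero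
    (fun u hu => inner_le_norm_of_norm_le_one (mem_closedBall_zero_iff.1 hu))
    (fun u hu => exists_lt_inner_sub_norm (by simpa using hu))

theorem mem_subdiff_norm_iff {x u : E} :
    u ∈ subdiff (fun y : E => (‖y‖ : EReal)) x ↔ ‖u‖ ≤ 1 ∧ inner ℝ u x = ‖x‖ := by
  rw [mem_subdiff_coe_iff]
  refine ⟨fun h => ?_, fun ⟨hu, hux⟩ y => ?_⟩
  · have h0 := h 0
    have h2 := h ((2 : ℝ) • x)
    have hxu := h (x + u)
    rw [zero_sub, inner_neg_right, norm_zero] at h0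
    rw [two_smul, add_sub_cancel_right] at h2
    rw [add_sub_cancel_left, real_inner_self_eq_norm_sq] at hxu
    have hu : ‖u‖ ^ 2 ≤ ‖u‖ := by linarith [norm_add_le x u]
    have hx : inner ℝ u x ≤ ‖x‖ := by linarith [norm_add_le x x]
    exact ⟨by nlinarith [norm_nonneg u], by linarith⟩
  · rw [inner_sub_right, hux]
    linarith [inner_le_norm_of_norm_le_one hu y]

end Subdifferential

section Separable

variable {N : ℕ}

theorem sum_nonpos_on_coordBox_iff {C : Fin N → Set ℝ} {g : Fin N → ℝ → ℝ}
    {x : EuclideanSpace ℝ (Fin N)} (hx : x ∈ coordBox C) (hg : ∀ i, g i (x i) = 0) :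
    (∀ y ∈ coordBox C, ∑ i, g i (y i) ≤ 0) ↔ ∀ i, ∀ t ∈ C i, g i t ≤ 0 := by
  refine ⟨fun h i t ht => ?_, fun h y hy => Finset.sum_nonpos fun i _ => h i _ (hy i)⟩
  classical
  let y := WithLp.toLp 2 (Function.update x.ofLp i t)
  have hy : y ∈ coordBox C := fun j => by
    rcases eq_or_ne j i with rfl | hj
    · simpa [y] using ht
    · simpa [y, hj] using hx j
  have hsum : ∑ j, g j (y j) = g i t :=
    (Finset.sum_eq_single i (fun j _ hj => by simpa [y, hj] using hg j) (by simp)).trans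
      (by simp [y])
  exact hsum ▸ h y hy

theorem subdiff_sum_apply_eq_coordBox (f : ℝ → ℝ) (x : EuclideanSpace ℝ (Fin N)) :
    subdiff (fun y : EuclideanSpace ℝ (Fin N) => ((∑ i, f (y i) : ℝ) : EReal)) x =
      coordBox fun i => subdiff (fun t => (f t : EReal)) (x i) := by
  ext u
  have key (y : EuclideanSpace ℝ (Fin N)) :
      ∑ i, f (x i) + inner ℝ u (y - x) ≤ ∑ i, f (y i) ↔
        ∑ i, (f (x i) + inner ℝ (u i) (y i - x i) - f (y i)) ≤ 0 := by
    simp only [PiLp.inner_apply, PiLp.sub_apply, Finset.sum_sub_distrib, Finset.sum_add_distrib,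
      sub_nonpos]
  simp only [mem_subdiff_coe_iff, key, coordBox, mem_ofPred_eq]
  simpa [coordBox, sub_nonpos] using
    sum_nonpos_on_coordBox_iff (C := fun _ => univ) (x := x)
      (g := fun i t => f (x i) + inner ℝ (u i) (t - x i) - f t) (fun _ => trivial) (by simp)

theorem subdiff_convexIndicator_coordBox {C : Fin N → Set ℝ} (hC : ∀ i, (C i).Nonempty)
    (u : EuclideanSpace ℝ (Fin N)) :
    subdiff (convexIndicator (coordBox C)) u =
      coordBox fun i => subdiff (convexIndicator (C i)) (u i) := by
  by_cases hu : u ∈ coordBox C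
  · ext v
    rw [mem_subdiff_convexIndicator_iff hu]
    simp only [PiLp.inner_apply, PiLp.sub_apply]
    rw [sum_nonpos_on_coordBox_iff hu (g := fun i t => inner ℝ (v i) (t - u i)) (by simp)]
    exact forall_congr' fun i => (mem_subdiff_convexIndicator_iff (hu i)).symm
  · obtain ⟨i, hi⟩ : ∃ i, u i ∉ C i := by simpa [coordBox] using hu
    rw [subdiff_convexIndicator_of_notMem (coordBox_nonempty_iff.2 hC) hu, eq_comm,
      ← not_nonempty_iff_eq_empty, coordBox_nonempty_iff, not_forall]
    exact ⟨i, by rw [subdiff_convexIndicator_of_notMem (hC i) hi]; exact not_nonempty_empty⟩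

theorem domSubdiff_eq_coordBox {f : ℝ → EReal} {R : EuclideanSpace ℝ (Fin N) → EReal}
    (hR : ∀ x, subdiff R x = coordBox fun i => subdiff f (x i)) :
    domSubdiff R = coordBox fun _ => domSubdiff f := by
  ext x
  simp only [domSubdiff, mem_ofPred_eq, hR, coordBox_nonempty_iff]
  rfl

theorem corrOp_coordBox {f : ℝ → EReal} {R : EuclideanSpace ℝ (Fin N) → EReal}
    (hR : ∀ x, subdiff R x = coordBox fun i => subdiff f (x i)) (s : Fin N → Set ℝ) :
    corrOp R (coordBox s) = coordBox fun i => corrOp f (s i) := by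
  simp only [corrOp, hR, intrinsicInterior_coordBox]
  exact biUnion_coordBox s fun _ t => intrinsicInterior ℝ (subdiff f t)

theorem IsMirrorStratifiable.coordProd {f : ℝ → EReal} {S Sd : Set (Set ℝ)}
    (h : IsMirrorStratifiable f S Sd) {R : EuclideanSpace ℝ (Fin N) → EReal}
    (hR : ∀ x, subdiff R x = coordBox fun i => subdiff f (x i))
    (hR' : ∀ u, subdiff (fenchel R) u = coordBox fun i => subdiff (fenchel f) (u i)) :
    IsMirrorStratifiable R (coordProdStrat S N) (coordProdStrat Sd N) where
  primal := domSubdiff_eq_coordBox hR ▸ h.primal.coordProd N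
  dual := domSubdiff_eq_coordBox hR' ▸ h.dual.coordProd N
  maps_primal := by
    rintro _ ⟨s, hs, rfl⟩
    exact ⟨_, fun i => h.maps_primal _ (hs i), corrOp_coordBox hR s⟩
  maps_dual := by
    rintro _ ⟨s, hs, rfl⟩
    exact ⟨_, fun i => h.maps_dual _ (hs i), corrOp_coordBox hR' s⟩
  pairing := by
    intro M hM Md hMd
    obtain ⟨s, hs, rfl⟩ := mem_coordProdStrat.1 hM
    obtain ⟨t, ht, rfl⟩ := mem_coordProdStrat.1 hMd
    rw [corrOp_coordBox hR, corrOp_coordBox hR',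
      coordBox_inj (fun i => h.dual.nonempty _ (h.maps_primal _ (hs i)))
        (fun i => h.dual.nonempty _ (ht i)),
      coordBox_inj (fun i => h.primal.nonempty _ (h.maps_dual _ (ht i)))
        (fun i => h.primal.nonempty _ (hs i)), funext_iff, funext_iff]
    exact forall_congr' fun i => h.pairing _ (hs i) _ (ht i)
  decreasing := by
    intro M hM M' hM'
    obtain ⟨s, hs, rfl⟩ := mem_coordProdStrat.1 hM
    obtain ⟨t, ht, rfl⟩ := mem_coordProdStrat.1 hM'
    simp only [stratLE, corrOp_coordBox hR, closure_coordBox]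
    rw [coordBox_subset_coordBox_iff fun i => h.primal.nonempty _ (hs i),
      coordBox_subset_coordBox_iff fun i => h.dual.nonempty _ (h.maps_primal _ (ht i))]
    exact forall_congr' fun i => h.decreasing _ (hs i) _ (ht i)

end Separable

section AbsoluteValue

open Function

def signStratum : SignType → Set ℝ
  | .neg => Iio 0
  | .zero => {0}
  | .pos => Ioi 0

def cubeStratum : SignType → Set ℝ
  | .neg => {-1}
  | .zero => Ioo (-1) 1
  | .pos => {1}

theorem range_signStratum : range signStratum = {Iio 0, {0}, Ioi 0} := by
  ext M
  simp only [mem_range, mem_insert_iff, mem_singleton_iff]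
  constructor
  · rintro ⟨s, rfl⟩
    cases s <;> simp [signStratum]
  · rintro (rfl | rfl | rfl)
    exacts [⟨.neg, rfl⟩, ⟨.zero, rfl⟩, ⟨.pos, rfl⟩]

theorem range_cubeStratum : range cubeStratum = {{-1}, Ioo (-1) 1, {1}} := by
  ext M
  simp only [mem_range, mem_insert_iff, mem_singleton_iff]
  constructor
  · rintro ⟨s, rfl⟩
    cases s <;> simp [cubeStratum]
  · rintro (rfl | rfl | rfl)
    exacts [⟨.neg, rfl⟩, ⟨.zero, rfl⟩, ⟨.pos, rfl⟩]

theorem signStratum_nonempty (s : SignType) : (signStratum s).Nonempty := by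
  cases s
  exacts [⟨0, rfl⟩, ⟨-1, by norm_num [signStratum]⟩, ⟨1, by norm_num [signStratum]⟩]

theorem cubeStratum_nonempty (s : SignType) : (cubeStratum s).Nonempty := by
  cases s
  exacts [⟨0, by norm_num [cubeStratum]⟩, ⟨-1, rfl⟩, ⟨1, rfl⟩]

theorem pairwise_disjoint_signStratum : Pairwise (Disjoint on signStratum) := by
  intro s s' h
  cases s <;> cases s' <;> simp_all [signStratum, onFun]

theorem pairwise_disjoint_cubeStratum : Pairwise (Disjoint on cubeStratum) := by
  intro s s' h
  cases s <;> cases s' <;> first | exact absurd rfl h | norm_num [cubeStratum, onFun]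

theorem iUnion_signStratum : ⋃ s, signStratum s = univ := by
  refine eq_univ_of_forall fun t => mem_iUnion.2 ⟨SignType.sign t, ?_⟩
  rcases lt_trichotomy t 0 with h | rfl | h <;> simp [signStratum, *]

theorem cubeStratum_subset_Icc (s : SignType) : cubeStratum s ⊆ Icc (-1) 1 := by
  cases s <;> simp [cubeStratum, Ioo_subset_Icc_self]

theorem iUnion_cubeStratum : ⋃ s, cubeStratum s = Icc (-1) 1 := by
  ext u
  simp only [mem_iUnion, mem_Icc]
  constructor
  · rintro ⟨s, hs⟩
    exact cubeStratum_subset_Icc s hs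
  · rintro ⟨h1, h2⟩
    rcases h1.eq_or_lt with rfl | h1
    · exact ⟨.neg, rfl⟩
    rcases h2.eq_or_lt with rfl | h2
    · exact ⟨.pos, rfl⟩
    exact ⟨.zero, h1, h2⟩

theorem eq_or_eq_zero_of_signStratum_inter_closure {s s' : SignType}
    (h : (signStratum s ∩ closure (signStratum s')).Nonempty) : s = s' ∨ s = 0 := by
  obtain ⟨t, h1, h2⟩ := h
  cases s <;> cases s' <;> simp [signStratum, closure_Iio, closure_Ioi] at h1 h2 ⊢ <;> linarith

theorem eq_or_eq_zero_of_cubeStratum_inter_closure {s s' : SignType}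
    (h : (cubeStratum s' ∩ closure (cubeStratum s)).Nonempty) : s = s' ∨ s = 0 := by
  obtain ⟨t, h1, h2⟩ := h
  cases s <;> cases s' <;> norm_num [cubeStratum, closure_Ioo] at h1 h2 ⊢ <;> linarith

theorem signStratum_subset_closure_iff {s s' : SignType} :
    signStratum s ⊆ closure (signStratum s') ↔ s = s' ∨ s = 0 := by
  refine ⟨fun h => eq_or_eq_zero_of_signStratum_inter_closure ?_, ?_⟩
  · obtain ⟨t, ht⟩ := signStratum_nonempty s
    exact ⟨t, ht, h ht⟩
  · rintro (rfl | rfl)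
    · exact subset_closure
    · cases s' <;> simp [signStratum, closure_Iio, closure_Ioi]

theorem cubeStratum_subset_closure_iff {s s' : SignType} :
    cubeStratum s' ⊆ closure (cubeStratum s) ↔ s = s' ∨ s = 0 := by
  refine ⟨fun h => eq_or_eq_zero_of_cubeStratum_inter_closure ?_, ?_⟩
  · obtain ⟨t, ht⟩ := cubeStratum_nonempty s'
    exact ⟨t, ht, h ht⟩
  · rintro (rfl | rfl)
    · exact subset_closure
    · simp only [cubeStratum, closure_Ioo (by norm_num : (-1 : ℝ) ≠ 1), ← iUnion_cubeStratum]
      exact subset_iUnion cubeStratum s'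

theorem intrinsicInterior_closure_signStratum (s : SignType) :
    intrinsicInterior ℝ (closure (signStratum s)) = signStratum s := by
  cases s
  · simp [signStratum]
  · rw [signStratum, closure_Iio, intrinsicInterior_eq_interior (by simp), interior_Iic]
  · rw [signStratum, closure_Ioi, intrinsicInterior_eq_interior (by simp), interior_Ici]

theorem intrinsicInterior_closure_cubeStratum (s : SignType) :
    intrinsicInterior ℝ (closure (cubeStratum s)) = cubeStratum s := by
  cases s
  · rw [cubeStratum, closure_Ioo (by norm_num), intrinsicInterior_eq_interior (by simp),
      interior_Icc]
  · simp [cubeStratum]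
  · simp [cubeStratum]

theorem subdiff_abs_of_mem_signStratum {s : SignType} {t : ℝ} (ht : t ∈ signStratum s) :
    subdiff (fun t : ℝ => ((|t| : ℝ) : EReal)) t = closure (cubeStratum s) := by
  ext a
  simp only [← Real.norm_eq_abs, mem_subdiff_norm_iff, Real.inner_apply]
  simp only [Real.norm_eq_abs]
  cases s
  · simp only [signStratum, mem_singleton_iff] at ht
    simp [ht, cubeStratum, closure_Ioo (by norm_num : (-1 : ℝ) ≠ 1), abs_le]
  · simp only [signStratum, mem_Iio] at ht
    simp only [cubeStratum, closure_singleton, mem_singleton_iff, abs_of_neg ht]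
    constructor
    · rintro ⟨-, h⟩
      nlinarith
    · rintro rfl
      simp
  · simp only [signStratum, mem_Ioi] at ht
    simp only [cubeStratum, closure_singleton, mem_singleton_iff, abs_of_pos ht]
    constructor
    · rintro ⟨-, h⟩
      nlinarith
    · rintro rfl
      simp

theorem subdiff_convexIndicator_Icc_of_mem_cubeStratum {s : SignType} {u : ℝ}
    (hu : u ∈ cubeStratum s) :
    subdiff (convexIndicator (Icc (-1) 1)) u = closure (signStratum s) := by
  ext v
  simp only [mem_subdiff_convexIndicator_iff (cubeStratum_subset_Icc s hu), Real.inner_apply,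
    mem_Icc, and_imp]
  cases s
  · simp only [cubeStratum, mem_Ioo] at hu
    simp only [signStratum, closure_singleton, mem_singleton_iff]
    constructor
    · intro h
      nlinarith [h ((u + 1) / 2) (by linarith) (by linarith),
        h ((u - 1) / 2) (by linarith) (by linarith)]
    · rintro rfl y - -
      simp
  · simp only [cubeStratum, mem_singleton_iff] at hu
    subst hu
    simp only [signStratum, closure_Iio, mem_Iic]
    constructor
    · intro h
      nlinarith [h 1 (by norm_num) le_rfl]
    · rintro hv y hy -
      nlinarith
  · simp only [cubeStratum, mem_singleton_iff] at hu
    subst hu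
    simp only [signStratum, closure_Ioi, mem_Ici]
    constructor
    · intro h
      nlinarith [h (-1) le_rfl (by norm_num)]
    · rintro hv y - hy
      nlinarith

theorem corrOp_eq_intrinsicInterior {R : E → EReal} {S C : Set E} (hS : S.Nonempty)
    (h : ∀ x ∈ S, subdiff R x = C) : corrOp R S = intrinsicInterior ℝ C := by
  ext u
  simp only [corrOp, mem_iUnion, exists_prop]
  refine ⟨fun ⟨x, hx, hu⟩ => h x hx ▸ hu, fun hu => ?_⟩
  obtain ⟨x, hx⟩ := hS
  exact ⟨x, hx, (h x hx).symm ▸ hu⟩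

theorem fenchel_abs :
    fenchel (fun t : ℝ => ((|t| : ℝ) : EReal)) = convexIndicator (Icc (-1) 1) := by
  simp only [← Real.norm_eq_abs, fenchel_norm, Real.closedBall_eq_Icc]
  norm_num

theorem corrOp_abs_signStratum (s : SignType) :
    corrOp (fun t : ℝ => ((|t| : ℝ) : EReal)) (signStratum s) = cubeStratum s := by
  rw [corrOp_eq_intrinsicInterior (signStratum_nonempty s)
    fun _ => subdiff_abs_of_mem_signStratum, intrinsicInterior_closure_cubeStratum]

theorem corrOp_fenchel_abs_cubeStratum (s : SignType) :
    corrOp (fenchel fun t : ℝ => ((|t| : ℝ) : EReal)) (cubeStratum s) = signStratum s := by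
  rw [fenchel_abs, corrOp_eq_intrinsicInterior (cubeStratum_nonempty s)
    fun _ => subdiff_convexIndicator_Icc_of_mem_cubeStratum, intrinsicInterior_closure_signStratum]

theorem domSubdiff_abs : domSubdiff (fun t : ℝ => ((|t| : ℝ) : EReal)) = univ := by
  refine eq_univ_of_forall fun t => ?_
  obtain ⟨s, hs⟩ := mem_iUnion.1 (iUnion_signStratum ▸ mem_univ t : t ∈ ⋃ s, signStratum s)
  rw [domSubdiff, mem_ofPred_eq, subdiff_abs_of_mem_signStratum hs]
  exact (cubeStratum_nonempty s).closure

theorem isMirrorStratifiable_abs :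
    IsMirrorStratifiable (fun t : ℝ => ((|t| : ℝ) : EReal)) (range signStratum)
      (range cubeStratum) where
  primal := by
    rw [domSubdiff_abs, ← iUnion_signStratum]
    exact isStratification_range signStratum_nonempty pairwise_disjoint_signStratum
      fun s s' h => signStratum_subset_closure_iff.2 (eq_or_eq_zero_of_signStratum_inter_closure h)
  dual := by
    rw [fenchel_abs, domSubdiff_convexIndicator ⟨0, by norm_num⟩, ← iUnion_cubeStratum]
    exact isStratification_range cubeStratum_nonempty pairwise_disjoint_cubeStratum
      fun s' s h => cubeStratum_subset_closure_iff.2 (eq_or_eq_zero_of_cubeStratum_inter_closure h)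
  maps_primal := by
    rintro _ ⟨s, rfl⟩
    exact ⟨s, (corrOp_abs_signStratum s).symm⟩
  maps_dual := by
    rintro _ ⟨s, rfl⟩
    exact ⟨s, (corrOp_fenchel_abs_cubeStratum s).symm⟩
  pairing := by
    rintro _ ⟨s, rfl⟩ _ ⟨s', rfl⟩
    rw [corrOp_abs_signStratum, corrOp_fenchel_abs_cubeStratum,
      (pairwise_disjoint_cubeStratum.injective_of_nonempty cubeStratum_nonempty).eq_iff,
      (pairwise_disjoint_signStratum.injective_of_nonempty signStratum_nonempty).eq_iff, eq_comm]
  decreasing := by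
    rintro _ ⟨s, rfl⟩ _ ⟨s', rfl⟩
    rw [corrOp_abs_signStratum, corrOp_abs_signStratum]
    exact signStratum_subset_closure_iff.trans cubeStratum_subset_closure_iff.symm

end AbsoluteValue

theorem fenchel_sum_abs (N : ℕ) :
    fenchel (fun x : EuclideanSpace ℝ (Fin N) => ((∑ i, |x i| : ℝ) : EReal)) =
      convexIndicator (coordBox fun _ => Icc (-1) 1) := by
  refine fenchel_coe_eq_convexIndicator (by simp) (fun u hu x => ?_) (fun u hu M => ?_)
  · rw [PiLp.inner_apply]
    refine Finset.sum_le_sum fun i _ => ?_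
    simpa using inner_le_norm_of_norm_le_one (by simpa [abs_le] using hu i) (x i)
  · obtain ⟨i, hi⟩ : ∃ i, u i ∉ Icc (-1) 1 := by simpa [coordBox] using hu
    obtain ⟨t, ht⟩ := exists_lt_inner_sub_norm (u := u i)
      (by rw [Real.norm_eq_abs]; exact not_le.1 fun h => hi (abs_le.1 h)) M
    classical
    refine ⟨EuclideanSpace.single i t, ?_⟩
    simpa [EuclideanSpace.inner_single_right, PiLp.single_apply, apply_ite, mul_comm] using ht

/-- Lemma 2.6: the `ℓ¹` norm, whose Fenchel conjugate is the indicator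
of the cube `[-1,1]^N`, is mirror-stratifiable w.r.t. the stratification
`{(-∞,0),{0},(0,∞)}^N` of `ℝ^N` and `{{-1},(-1,1),{1}}^N` of `[-1,1]^N`. -/
theorem l1_mirror_stratifiable (N : ℕ) :
    let R : EuclideanSpace ℝ (Fin N) → EReal := fun x => ((∑ i, |x i| : ℝ) : EReal)
    (fenchel R = fun u => if ∀ i, |u i| ≤ 1 then (0 : EReal) else ⊤) ∧
    IsMirrorStratifiable R
      (coordProdStrat {Set.Iio 0, {0}, Set.Ioi 0} N)
      (coordProdStrat {{-1}, Set.Ioo (-1) 1, {1}} N) := by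
  intro R
  have hconj : fenchel R = convexIndicator (coordBox fun _ => Icc (-1) 1) := fenchel_sum_abs N
  refine ⟨?_, ?_⟩
  · funext u
    simp [hconj, convexIndicator, coordBox, abs_le]
  · rw [← range_signStratum, ← range_cubeStratum]
    refine isMirrorStratifiable_abs.coordProd (subdiff_sum_apply_eq_coordBox _) fun u => ?_
    rw [hconj, fenchel_abs]
    exact subdiff_convexIndicator_coordBox (fun _ => ⟨0, by norm_num⟩) u

end
end

section
/- For each m = 1, …, L, let R_m: ℝ^{N_m} → ℝ ∪ {+∞} be a proper lower semicontinuous convex function that is mirror-stratifiable with respect to stratifications (𝒮_m, 𝒮*_m). Then the separable function R: ℝ^{N_1} × ⋯ × ℝ^{N_L} → ℝ ∪ {+∞} defined by R(x_1, …, x_L) = Σ_{m=1}^L R_m(x_m) is mirror-stratifiable with respect to the product stratifications 𝒮_1 × ⋯ × 𝒮_L (whose strata are products M_1 × ⋯ × M_L with M_m ∈ 𝒮_m) and 𝒮*_1 × ⋯ × 𝒮*_L. -/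
open Filter Topology Set Pointwise

noncomputable section

variable {E : Type*} [NormedAddCommGroup E] [InnerProductSpace ℝ E]

/-- Product stratification: strata are products `M₁ × ⋯ × M_L` of strata of the factors. -/
def prodStrat {L : ℕ} {Nd : Fin L → ℕ}
    (S : ∀ m, Set (Set (EuclideanSpace ℝ (Fin (Nd m))))) :
    Set (Set (PiLp 2 fun m => EuclideanSpace ℝ (Fin (Nd m)))) :=
  {M | ∃ Ms : ∀ m, Set (EuclideanSpace ℝ (Fin (Nd m))),
    (∀ m, Ms m ∈ S m) ∧ M = {x | ∀ m, x m ∈ Ms m}}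

/-!
Everything splits coordinatewise. For a separable sum of proper functions the subdifferential at
`x` is the product of the `∂R_m(x_m)` and the conjugate is the separable sum of the `R_m*`;
relative interiors and closures of products are products of the factors' ones, so `𝒥_R` maps a
product of strata to the product of their images. Strata are nonempty, so inclusions and
equalities between products of strata hold exactly when they hold factor by factor, and each
axiom of mirror-stratifiability is inherited from the factors.
-/

namespace EReal

variable {ι : Type*} {s : Finset ι}

lemma coe_finset_sum (s : Finset ι) (f : ι → ℝ) :
    ((∑ i ∈ s, f i : ℝ) : EReal) = ∑ i ∈ s, (f i : EReal) :=
  map_sum (⟨⟨(↑), rfl⟩, EReal.coe_add⟩ : ℝ →+ EReal) f s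

lemma finset_sum_ne_bot {a : ι → EReal} (h : ∀ i ∈ s, a i ≠ ⊥) : ∑ i ∈ s, a i ≠ ⊥ := by
  classical
  induction s using Finset.induction with
  | empty => simp
  | insert j t hj ih =>
    rw [Finset.sum_insert hj]
    exact add_ne_bot_iff.2 ⟨h j (by simp), ih fun i hi => h i (by simp [hi])⟩

lemma finset_sum_ne_top_iff {a : ι → EReal} (h : ∀ i ∈ s, a i ≠ ⊥) :
    ∑ i ∈ s, a i ≠ ⊤ ↔ ∀ i ∈ s, a i ≠ ⊤ := by
  classical
  induction s using Finset.induction with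
  | empty => simp
  | insert j t hj ih =>
    have ht : ∀ i ∈ t, a i ≠ ⊥ := fun i hi => h i (by simp [hi])
    rw [Finset.sum_insert hj, add_ne_top_iff_ne_top₂ (h j (by simp)) (finset_sum_ne_bot ht),
      ih ht, Finset.forall_mem_insert]

lemma neg_finset_sum {a : ι → EReal} (h : ∀ i ∈ s, a i ≠ ⊥) :
    -∑ i ∈ s, a i = ∑ i ∈ s, -a i := by
  classical
  induction s using Finset.induction with
  | empty => simp
  | insert j t hj ih =>
    have ht : ∀ i ∈ t, a i ≠ ⊥ := fun i hi => h i (by simp [hi])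
    rw [Finset.sum_insert hj, Finset.sum_insert hj, EReal.neg_add (.inl (h j (by simp)))
      (.inr (finset_sum_ne_bot ht)), sub_eq_add_neg, ih ht]

lemma coe_finset_sum_sub_finset_sum (r : ι → ℝ) {a : ι → EReal} (h : ∀ i ∈ s, a i ≠ ⊥) :
    ((∑ i ∈ s, r i : ℝ) : EReal) - ∑ i ∈ s, a i = ∑ i ∈ s, ((r i : EReal) - a i) := by
  simp only [sub_eq_add_neg, neg_finset_sum h, coe_finset_sum, Finset.sum_add_distrib]

lemma iSup_add_iSup_le {α β : Type*} {f : α → EReal} {g : β → EReal} {c : EReal}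
    (h : ∀ a b, f a + g b ≤ c) : (⨆ a, f a) + (⨆ b, g b) ≤ c :=
  add_le_of_forall_lt fun _ ha _ hb => by
    obtain ⟨a, ha⟩ := lt_iSup_iff.1 ha
    obtain ⟨b, hb⟩ := lt_iSup_iff.1 hb
    exact (add_le_add ha.le hb.le).trans (h a b)

lemma iSup_finset_sum_eval {X : ι → Type*} [∀ i, Nonempty (X i)] (g : ∀ i, X i → EReal)
    (s : Finset ι) : ⨆ x : ∀ i, X i, ∑ i ∈ s, g i (x i) = ∑ i ∈ s, ⨆ y, g i y := by
  classical
  refine le_antisymm (iSup_le fun x => Finset.sum_le_sum fun i _ => le_iSup (g i) (x i)) ?_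
  induction s using Finset.induction with
  | empty => simp
  | insert j t hj ih =>
    rw [Finset.sum_insert hj]
    refine (add_le_add le_rfl ih).trans (iSup_add_iSup_le fun y x => ?_)
    refine le_iSup_of_le (Function.update x j y) (le_of_eq ?_)
    rw [Finset.sum_insert hj, Function.update_self]
    congr 1
    exact Finset.sum_congr rfl fun i hi => by
      rw [Function.update_of_ne (ne_of_mem_of_not_mem hi hj)]

end EReal

theorem mem_intrinsicInterior_iff_mem_nhdsWithin {𝕜 V P : Type*} [Ring 𝕜] [AddCommGroup V]
    [Module 𝕜 V] [TopologicalSpace P] [AddTorsor V P] {s : Set P} {x : P} :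
    x ∈ intrinsicInterior 𝕜 s ↔ x ∈ s ∧ s ∈ 𝓝[affineSpan 𝕜 s] x := by
  constructor
  · rintro ⟨y, hy, rfl⟩
    have hy := preimage_coe_mem_nhds_subtype.1 (mem_interior_iff_mem_nhds.1 hy)
    exact ⟨mem_of_mem_nhdsWithin y.2 hy, hy⟩
  · rintro ⟨hx, hs⟩
    exact ⟨⟨x, subset_affineSpan 𝕜 s hx⟩,
      mem_interior_iff_mem_nhds.2 (preimage_coe_mem_nhds_subtype.2 hs), rfl⟩

section Pi

variable {𝕜 ι : Type*} [Ring 𝕜] [Fintype ι] {V : ι → Type*} [∀ i, AddCommGroup (V i)]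
  [∀ i, Module 𝕜 (V i)]

theorem affineSpan_univ_pi {A : ∀ i, Set (V i)} (hA : ∀ i, (A i).Nonempty) :
    (affineSpan 𝕜 (univ.pi A) : Set (∀ i, V i)) =
      univ.pi fun i => (affineSpan 𝕜 (A i) : Set (V i)) := by
  classical
  have hpi : (univ.pi A).Nonempty := univ_pi_nonempty_iff.2 hA
  apply Subset.antisymm
  · intro z hz i _
    have : AffineMap.proj i z ∈ (affineSpan 𝕜 (univ.pi A)).map (AffineMap.proj i) :=
      AffineSubspace.mem_map_of_mem _ hz
    rwa [AffineSubspace.map_span, show ⇑(AffineMap.proj (k := 𝕜) (P := V) i) = Function.eval i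
      from rfl, eval_image_univ_pi hpi] at this
  · intro z hz
    obtain ⟨a, ha⟩ := hpi
    have hsingle (i : ι) :
        (vectorSpan 𝕜 (A i)).map (LinearMap.single 𝕜 V i) ≤ vectorSpan 𝕜 (univ.pi A) := by
      rw [vectorSpan_def, vectorSpan_def, Submodule.map_span]
      refine Submodule.span_mono ?_
      rintro _ ⟨_, ⟨p, hp, q, hq, rfl⟩, rfl⟩
      refine ⟨Function.update a i p, (update_mem_pi_iff_of_mem ha).2 fun _ => hp,
        Function.update a i q, (update_mem_pi_iff_of_mem ha).2 fun _ => hq, ?_⟩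
      ext j
      rcases eq_or_ne j i with rfl | hj <;> simp [*]
    have hdir : z -ᵥ a ∈ (affineSpan 𝕜 (univ.pi A)).direction := by
      rw [direction_affineSpan, vsub_eq_sub, ← Finset.univ_sum_single (z - a)]
      exact Submodule.sum_mem _ fun i _ => hsingle i <| Submodule.mem_map_of_mem <|
        vsub_mem_vectorSpan_of_mem_affineSpan_of_mem_affineSpan (hz i trivial)
          (subset_affineSpan _ _ (ha i trivial))
    simpa using AffineSubspace.vadd_mem_of_mem_direction hdir (subset_affineSpan 𝕜 _ ha)

theorem intrinsicInterior_univ_pi_s3 [∀ i, TopologicalSpace (V i)] (A : ∀ i, Set (V i)) :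
    intrinsicInterior 𝕜 (univ.pi A) = univ.pi fun i => intrinsicInterior 𝕜 (A i) := by
  by_cases hA : ∀ i, (A i).Nonempty
  · ext x
    simp only [mem_intrinsicInterior_iff_mem_nhdsWithin, affineSpan_univ_pi hA, mem_univ_pi,
      forall_and, and_congr_right_iff]
    intro hx
    have (i : ι) : (𝓝[affineSpan 𝕜 (A i)] x i).NeBot :=
      mem_closure_iff_nhdsWithin_neBot.1 (subset_closure (subset_affineSpan 𝕜 _ (hx i)))
    rw [nhdsWithin_pi_univ_eq]
    exact (Filter.pi_mem_pi_iff finite_univ).trans (by simp)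
  · obtain ⟨i, hi⟩ := not_forall.1 hA
    rw [not_nonempty_iff_eq_empty] at hi
    rw [univ_pi_eq_empty hi, intrinsicInterior_empty,
      univ_pi_eq_empty (i := i) (by rw [hi, intrinsicInterior_empty])]

end Pi

namespace PiLp

variable {p : ENNReal} {ι : Type*} {X : ι → Type*}

theorem setOf_forall_mem_eq_preimage (A : ∀ i, Set (X i)) :
    {z : PiLp p X | ∀ i, z i ∈ A i} = WithLp.ofLp ⁻¹' univ.pi A := by
  ext; simp

theorem setOf_forall_mem_nonempty_iff {A : ∀ i, Set (X i)} :
    {z : PiLp p X | ∀ i, z i ∈ A i}.Nonempty ↔ ∀ i, (A i).Nonempty := by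
  rw [setOf_forall_mem_eq_preimage, (WithLp.ofLp_surjective p).nonempty_preimage,
    univ_pi_nonempty_iff]

theorem setOf_forall_mem_subset_iff {A B : ∀ i, Set (X i)} (hA : ∀ i, (A i).Nonempty) :
    {z : PiLp p X | ∀ i, z i ∈ A i} ⊆ {z | ∀ i, z i ∈ B i} ↔ ∀ i, A i ⊆ B i := by
  simp only [setOf_forall_mem_eq_preimage,
    (WithLp.ofLp_surjective p).preimage_subset_preimage_iff, univ_pi_subset_univ_pi_iff,
    fun i => (hA i).ne_empty, exists_false, or_false]

theorem setOf_forall_mem_inj {A B : ∀ i, Set (X i)} (hA : ∀ i, (A i).Nonempty) :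
    {z : PiLp p X | ∀ i, z i ∈ A i} = {z | ∀ i, z i ∈ B i} ↔ A = B := by
  refine ⟨fun h => funext fun i => ?_, fun h => h ▸ rfl⟩
  have hB := setOf_forall_mem_nonempty_iff.1 (h ▸ setOf_forall_mem_nonempty_iff.2 hA)
  exact ((setOf_forall_mem_subset_iff hA).1 h.le i).antisymm
    ((setOf_forall_mem_subset_iff hB).1 h.ge i)

theorem closure_setOf_forall_mem [∀ i, TopologicalSpace (X i)] (A : ∀ i, Set (X i)) :
    closure {z : PiLp p X | ∀ i, z i ∈ A i} = {z | ∀ i, z i ∈ closure (A i)} := by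
  rw [setOf_forall_mem_eq_preimage, setOf_forall_mem_eq_preimage, ← closure_pi_set]
  exact ((PiLp.homeomorph p X).preimage_closure _).symm

theorem intrinsicInterior_setOf_forall_mem {𝕜 : Type*} [Ring 𝕜] [Fintype ι]
    [∀ i, AddCommGroup (X i)] [∀ i, Module 𝕜 (X i)] [∀ i, TopologicalSpace (X i)]
    (A : ∀ i, Set (X i)) :
    intrinsicInterior 𝕜 {z : PiLp p X | ∀ i, z i ∈ A i} =
      {z | ∀ i, z i ∈ intrinsicInterior 𝕜 (A i)} := by
  let e := (PiLp.continuousLinearEquiv p 𝕜 X).symm.toContinuousAffineEquiv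
  have he : image e = preimage WithLp.ofLp :=
    image_eq_preimage_of_inverse (f := e) (fun _ => rfl) (fun _ => rfl)
  rw [setOf_forall_mem_eq_preimage, setOf_forall_mem_eq_preimage, ← he,
    e.intrinsicInterior_image, intrinsicInterior_univ_pi_s3]

end PiLp

theorem fenchel_eq_of_mem_subdiff {R : E → EReal} {x u : E} (hu : u ∈ subdiff R x) :
    fenchel R u = (inner ℝ u x : EReal) - R x := by
  refine le_antisymm (iSup_le fun y => ?_) (le_iSup (fun y => (inner ℝ u y : EReal) - R y) x)
  have hy := hu y
  induction hRx : R x with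
  | bot => simp
  | top =>
    rw [hRx, EReal.top_add_coe, top_le_iff] at hy
    simp [hy]
  | coe r =>
    rw [hRx] at hy
    calc (inner ℝ u y : EReal) - R y
        ≤ (inner ℝ u y : EReal) - ((r + inner ℝ u (y - x) : ℝ) : EReal) :=
          EReal.sub_le_sub le_rfl hy
      _ = ((inner ℝ u x - r : ℝ) : EReal) := by
          rw [inner_sub_right]; norm_cast; ring_nf
      _ = _ := rfl

theorem fenchel_ne_top_of_mem_subdiff {R : E → EReal} {x u : E} (hx : R x ≠ ⊥)
    (hu : u ∈ subdiff R x) : fenchel R u ≠ ⊤ := by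
  rw [fenchel_eq_of_mem_subdiff hu]
  induction hRx : R x with
  | bot => exact absurd hRx hx
  | top => simp
  | coe r => exact EReal.coe_ne_top _

theorem ne_top_of_mem_subdiff {R : E → EReal} (hR : ∃ y, R y ≠ ⊤) {x u : E}
    (hu : u ∈ subdiff R x) : R x ≠ ⊤ := by
  intro hx
  obtain ⟨y, hy⟩ := hR
  have := hu y
  rw [hx, EReal.top_add_coe, top_le_iff] at this
  exact hy this

theorem ProperFn.fenchel_ne_bot {R : E → EReal} (hR : ProperFn R) (u : E) :
    fenchel R u ≠ ⊥ := by
  obtain ⟨x, hx⟩ := hR.2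
  refine ne_bot_of_le_ne_bot ?_ (le_iSup (fun x => (inner ℝ u x : EReal) - R x) x)
  lift R x to ℝ using ⟨hx, hR.1 x⟩ with r
  exact EReal.coe_ne_bot _

-- `R*` is proper for every proper lsc convex `R`, but here this follows without any separation
-- argument: if `R* ≡ ⊤` then `0 ∈ dom ∂R*`, and the mirror of its stratum is a nonempty set of
-- points of `dom ∂R`, at whose subgradients `R*` is finite.
theorem IsMirrorStratifiable.properFn_fenchel {R : E → EReal} {S Sd : Set (Set E)}
    (h : IsMirrorStratifiable R S Sd) (hR : ProperFn R) : ProperFn (fenchel R) := by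
  refine ⟨hR.fenchel_ne_bot, ?_⟩
  by_contra! htop
  have h0 : (0 : E) ∈ domSubdiff (fenchel R) := ⟨0, fun y => by simp [htop]⟩
  rw [← h.dual.cover] at h0
  obtain ⟨Md, hMd, -⟩ := h0
  obtain ⟨x, hx⟩ := h.primal.nonempty _ (h.maps_dual Md hMd)
  have hx : x ∈ ⋃₀ S := ⟨_, h.maps_dual Md hMd, hx⟩
  rw [h.primal.cover] at hx
  obtain ⟨u, hu⟩ := hx
  exact fenchel_ne_top_of_mem_subdiff (hR.1 x) hu (htop u)

theorem IsMirrorStratifiable.corrOp_nonempty {R : E → EReal} {S Sd : Set (Set E)}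
    (h : IsMirrorStratifiable R S Sd) {M : Set E} (hM : M ∈ S) : (corrOp R M).Nonempty :=
  h.dual.nonempty _ (h.maps_primal M hM)

theorem IsMirrorStratifiable.corrOp_fenchel_nonempty {R : E → EReal} {S Sd : Set (Set E)}
    (h : IsMirrorStratifiable R S Sd) {Md : Set E} (hMd : Md ∈ Sd) :
    (corrOp (fenchel R) Md).Nonempty :=
  h.primal.nonempty _ (h.maps_dual Md hMd)

theorem ProperFn.separable_sum {ι : Type*} [Fintype ι] {X : ι → Type*} {F : ∀ i, X i → EReal}
    (hF : ∀ i, ProperFn (F i)) :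
    ProperFn fun z : PiLp 2 X => ∑ i, F i (z i) := by
  choose w hw using fun i => (hF i).2
  exact ⟨fun z => EReal.finset_sum_ne_bot fun i _ => (hF i).1 _, WithLp.toLp 2 w,
    (EReal.finset_sum_ne_top_iff fun i _ => (hF i).1 _).2 fun i _ => hw i⟩

section SeparableSum

variable {ι : Type*} [Fintype ι] {X : ι → Type*} [∀ i, NormedAddCommGroup (X i)]

theorem IsStratification.pi {D : ∀ i, Set (X i)} {S : ∀ i, Set (Set (X i))}
    (h : ∀ i, IsStratification (D i) (S i)) :
    IsStratification {z : PiLp 2 X | ∀ i, z i ∈ D i}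
      {M | ∃ Ms : ∀ i, Set (X i), (∀ i, Ms i ∈ S i) ∧ M = {z | ∀ i, z i ∈ Ms i}} where
  finite := ((Set.Finite.pi fun i => (h i).finite).image
      fun Ms => {z : PiLp 2 X | ∀ i, z i ∈ Ms i}).subset
    (by rintro _ ⟨Ms, hMs, rfl⟩; exact ⟨Ms, fun i _ => hMs i, rfl⟩)
  nonempty := by
    rintro _ ⟨Ms, hMs, rfl⟩
    exact PiLp.setOf_forall_mem_nonempty_iff.2 fun i => (h i).nonempty _ (hMs i)
  cover := by
    ext z
    refine ⟨?_, fun hz => ?_⟩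
    · rintro ⟨_, ⟨Ms, hMs, rfl⟩, hz⟩ i
      exact (h i).cover ▸ ⟨Ms i, hMs i, hz i⟩
    · choose Ms hMs hzMs using fun i => (h i).cover ▸ hz i
      exact ⟨_, ⟨Ms, hMs, rfl⟩, hzMs⟩
  pairwiseDisjoint := by
    rintro _ ⟨Ms, hMs, rfl⟩ _ ⟨Ms', hMs', rfl⟩ hne
    obtain ⟨i, hi⟩ : ∃ i, Ms i ≠ Ms' i := Function.ne_iff.1 (by rintro rfl; exact hne rfl)
    exact disjoint_left.2 fun z hz hz' =>
      disjoint_left.1 ((h i).pairwiseDisjoint _ (hMs i) _ (hMs' i) hi) (hz i) (hz' i)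
  frontier_cond := by
    rintro _ ⟨Ms, hMs, rfl⟩ _ ⟨Ms', hMs', rfl⟩ ⟨x, hx, hx'⟩
    rw [PiLp.closure_setOf_forall_mem] at hx' ⊢
    exact fun z hz i => (h i).frontier_cond _ (hMs i) _ (hMs' i) ⟨x i, hx i, hx' i⟩ (hz i)

variable [∀ i, InnerProductSpace ℝ (X i)]

theorem subdiff_separable_sum {F : ∀ i, X i → EReal} (hF : ∀ i, ProperFn (F i))
    (x : PiLp 2 X) :
    subdiff (fun z : PiLp 2 X => ∑ i, F i (z i)) x = {u | ∀ i, u i ∈ subdiff (F i) (x i)} := by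
  classical
  ext u
  refine ⟨fun hu i y => ?_, fun hu y => ?_⟩
  · have hbot : ∀ j ∈ Finset.univ, F j (x j) ≠ ⊥ := fun j _ => (hF j).1 _
    have hfin : ∀ j ∈ Finset.univ, F j (x j) ≠ ⊤ := (EReal.finset_sum_ne_top_iff hbot).1
      (ne_top_of_mem_subdiff (ProperFn.separable_sum hF).2 hu)
    -- Move `x` in the `i`-th coordinate only: the other coordinates contribute the same finite
    -- constant `c` to both sides, which cancels.
    have key := hu (x + PiLp.single 2 i (y - x i))
    dsimp only at key
    have hinner : inner ℝ u (x + PiLp.single 2 i (y - x i) - x) = inner ℝ (u i) (y - x i) := by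
      rw [add_sub_cancel_left, PiLp.inner_apply, Fintype.sum_eq_single i fun j hj => by
        rw [PiLp.single_eq_of_ne 2 hj, inner_zero_right], PiLp.single_eq_same]
    have hrest : ∀ j ∈ Finset.univ.erase i,
        F j ((x + PiLp.single 2 i (y - x i)) j) = F j (x j) := fun j hj => by
      rw [PiLp.add_apply, PiLp.single_eq_of_ne 2 (Finset.ne_of_mem_erase hj), add_zero]
    rw [hinner, ← Finset.add_sum_erase _ _ (Finset.mem_univ i),
      ← Finset.add_sum_erase _ _ (Finset.mem_univ i), Finset.sum_congr rfl hrest,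
      PiLp.add_apply, PiLp.single_eq_same, add_sub_cancel, add_right_comm] at key
    lift ∑ j ∈ Finset.univ.erase i, F j (x j) to ℝ using
      ⟨(EReal.finset_sum_ne_top_iff fun j _ => hbot j (Finset.mem_univ j)).2
        fun j _ => hfin j (Finset.mem_univ j),
      EReal.finset_sum_ne_bot fun j _ => hbot j (Finset.mem_univ j)⟩ with c
    exact (EReal.addLECancellable_coe c).add_le_add_iff_right.1 key
  · calc (∑ i, F i (x i)) + (inner ℝ u (y - x) : EReal)
        = ∑ i, (F i (x i) + (inner ℝ (u i) (y i - x i) : EReal)) := by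
          rw [Finset.sum_add_distrib, PiLp.inner_apply, EReal.coe_finset_sum]; rfl
      _ ≤ ∑ i, F i (y i) := Finset.sum_le_sum fun i _ => hu i (y i)

theorem domSubdiff_separable_sum {F : ∀ i, X i → EReal} (hF : ∀ i, ProperFn (F i)) :
    domSubdiff (fun z : PiLp 2 X => ∑ i, F i (z i)) = {x | ∀ i, x i ∈ domSubdiff (F i)} := by
  ext x
  exact (congrArg Set.Nonempty (subdiff_separable_sum hF x)).to_iff.trans
    PiLp.setOf_forall_mem_nonempty_iff

theorem corrOp_separable_sum {F : ∀ i, X i → EReal} (hF : ∀ i, ProperFn (F i))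
    (A : ∀ i, Set (X i)) :
    corrOp (fun z : PiLp 2 X => ∑ i, F i (z i)) {z | ∀ i, z i ∈ A i} =
      {u | ∀ i, u i ∈ corrOp (F i) (A i)} := by
  ext u
  simp only [corrOp, subdiff_separable_sum hF, PiLp.intrinsicInterior_setOf_forall_mem,
    mem_iUnion₂, mem_ofPred_eq, exists_prop]
  constructor
  · rintro ⟨x, hx, hu⟩ i
    exact ⟨x i, hx i, hu i⟩
  · intro h
    choose x hx hu using h
    exact ⟨WithLp.toLp 2 x, hx, hu⟩

theorem fenchel_separable_sum {F : ∀ i, X i → EReal} (hF : ∀ i x, F i x ≠ ⊥) :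
    fenchel (fun z : PiLp 2 X => ∑ i, F i (z i)) = fun u => ∑ i, fenchel (F i) (u i) := by
  funext u
  calc fenchel (fun z : PiLp 2 X => ∑ i, F i (z i)) u
      = ⨆ x : ∀ i, X i, ∑ i, ((inner ℝ (u i) (x i) : EReal) - F i (x i)) := by
        rw [fenchel, ← (WithLp.toLp_surjective 2).iSup_comp]
        refine iSup_congr fun x => ?_
        rw [PiLp.inner_apply, EReal.coe_finset_sum_sub_finset_sum _ fun i _ => hF i _]
    _ = _ := EReal.iSup_finset_sum_eval (fun i y => (inner ℝ (u i) y : EReal) - F i y) _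

end SeparableSum

/-- Remark 2.5, separability: if each `R_m` is proper lsc convex and
mirror-stratifiable w.r.t. `(S_m, Sd_m)`, then the separable sum
`R(x) = Σ_m R_m(x_m)` is mirror-stratifiable w.r.t. the product stratifications. -/
theorem separable_sum_mirror_stratifiable
    {L : ℕ} {Nd : Fin L → ℕ}
    (R : ∀ m, EuclideanSpace ℝ (Fin (Nd m)) → EReal)
    (hR : ∀ m, ProperConvexLsc (R m))
    (S Sd : ∀ m, Set (Set (EuclideanSpace ℝ (Fin (Nd m)))))
    (hms : ∀ m, IsMirrorStratifiable (R m) (S m) (Sd m)) :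
    IsMirrorStratifiable
      (fun x : PiLp 2 fun m => EuclideanSpace ℝ (Fin (Nd m)) => ∑ m, R m (x m))
      (prodStrat S) (prodStrat Sd) := by
  have hprop m : ProperFn (R m) := (hR m).1
  have hprop' m : ProperFn (fenchel (R m)) := (hms m).properFn_fenchel (hprop m)
  have hfen := fenchel_separable_sum fun m => (hprop m).1
  refine ⟨?_, ?_, ?_, ?_, ?_, ?_⟩
  · rw [domSubdiff_separable_sum hprop]
    exact IsStratification.pi fun m => (hms m).primal
  · rw [hfen, domSubdiff_separable_sum hprop']
    exact IsStratification.pi fun m => (hms m).dual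
  · rintro _ ⟨Ms, hMs, rfl⟩
    rw [corrOp_separable_sum hprop]
    exact ⟨_, fun m => (hms m).maps_primal _ (hMs m), rfl⟩
  · rintro _ ⟨Ms, hMs, rfl⟩
    rw [hfen, corrOp_separable_sum hprop']
    exact ⟨_, fun m => (hms m).maps_dual _ (hMs m), rfl⟩
  · rintro _ ⟨Ms, hMs, rfl⟩ _ ⟨Mds, hMds, rfl⟩
    rw [hfen, corrOp_separable_sum hprop, corrOp_separable_sum hprop',
      PiLp.setOf_forall_mem_inj fun m => (hms m).corrOp_nonempty (hMs m),
      PiLp.setOf_forall_mem_inj fun m => (hms m).corrOp_fenchel_nonempty (hMds m),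
      funext_iff, funext_iff]
    exact forall_congr' fun m => (hms m).pairing _ (hMs m) _ (hMds m)
  · rintro _ ⟨Ms, hMs, rfl⟩ _ ⟨Ms', hMs', rfl⟩
    rw [stratLE, stratLE, corrOp_separable_sum hprop, corrOp_separable_sum hprop,
      PiLp.closure_setOf_forall_mem, PiLp.closure_setOf_forall_mem,
      PiLp.setOf_forall_mem_subset_iff fun m => (hms m).primal.nonempty _ (hMs m),
      PiLp.setOf_forall_mem_subset_iff fun m => (hms m).corrOp_nonempty (hMs' m)]
    exact forall_congr' fun m => (hms m).decreasing _ (hMs m) _ (hMs' m)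

end
end

section
/- Let ℬ be a non-overlapping partition of {1, …, N} into K blocks, and let the ℓ_{1,2} norm be ‖x‖_ℬ = Σ_{B∈ℬ} ‖x^B‖₂, where x^B is the restriction of x ∈ ℝ^N to the entries indexed by B. Then ‖·‖_ℬ is mirror-stratifiable with respect to the product stratification whose strata are products over blocks B ∈ ℬ of the sets {0} ⊆ ℝ^{|B|} or ℝ^{|B|} ∖ {0}, and the product stratification whose strata are products over blocks B ∈ ℬ of the unit Euclidean sphere S^{|B|−1} or the open unit Euclidean ball of ℝ^{|B|}. -/
open Filter Topology Set Pointwise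

noncomputable section

variable {E : Type*} [NormedAddCommGroup E] [InnerProductSpace ℝ E]

/-- The Euclidean norm of the restriction of `x` to the block `b` of the partition
encoded by `Bl : Fin N → Fin K`. -/
def blockNorm {N K : ℕ} (Bl : Fin N → Fin K) (x : EuclideanSpace ℝ (Fin N)) (b : Fin K) : ℝ :=
  Real.sqrt (∑ i ∈ Finset.univ.filter (fun i => Bl i = b), (x i) ^ 2)

/-- The `ℓ_{1,2}` (group Lasso) norm associated with the partition `Bl`. -/
def l12Norm {N K : ℕ} (Bl : Fin N → Fin K) (x : EuclideanSpace ℝ (Fin N)) : ℝ :=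
  ∑ b, blockNorm Bl x b

/-- Primal strata: products over blocks of `{0}` or `ℝ^{|B|} ∖ {0}`. -/
def l12PrimalStrat {N K : ℕ} (Bl : Fin N → Fin K) : Set (Set (EuclideanSpace ℝ (Fin N))) :=
  {M | ∃ s : Fin K → Bool,
    M = {x | ∀ b, if s b then (∃ i, Bl i = b ∧ x i ≠ 0) else (∀ i, Bl i = b → x i = 0)}}

/-- Dual strata: products over blocks of the unit sphere or the open unit ball. -/
def l12DualStrat {N K : ℕ} (Bl : Fin N → Fin K) : Set (Set (EuclideanSpace ℝ (Fin N))) :=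
  {M | ∃ s : Fin K → Bool,
    M = {u | ∀ b, if s b then blockNorm Bl u b = 1 else blockNorm Bl u b < 1}}

/-!
The norm `R = ‖·‖_ℬ` is positively homogeneous and is the support function of the product `C` of
the unit balls of the blocks. Hence `R*` is the indicator of `C`, `x ∈ ∂R*(u) ↔ u ∈ ∂R(x)`, and
`u ∈ ∂R(x)` means blockwise `‖u^B‖ ≤ 1` and `⟪u^B, x^B⟫ = ‖x^B‖`. Computing relative interiors
on the affine hulls of these sets, `u ∈ ri ∂R(x)` and `x ∈ ri ∂R*(u)` both mean `u ∈ ∂R(x)`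
together with strict complementarity: `u^B` lies on the unit sphere exactly on the blocks where
`x^B ≠ 0`. So `𝒥_R` maps the primal stratum of support pattern `s` onto the dual stratum of
saturation pattern `s` and `𝒥_{R*}` maps it back. Both stratifications consist of the fibres of
these patterns, and the closure of the fibre over `s` is the set of points with pattern `≤ s`
(primal) or `≥ s` (dual), which gives the frontier condition and the order reversal.
-/

open scoped RealInnerProductSpace

section Homogeneous

variable {f : E → ℝ}

lemma map_zero_of_homogeneous (hf : ∀ c : ℝ, 0 ≤ c → ∀ x, f (c • x) = c * f x) : f 0 = 0 := by
  simpa using hf 0 le_rfl 0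

lemma mem_subdiff_iff_of_homogeneous (hf : ∀ c : ℝ, 0 ≤ c → ∀ x, f (c • x) = c * f x)
    {x u : E} :
    u ∈ subdiff (fun x => (f x : EReal)) x ↔ (∀ y, ⟪u, y⟫ ≤ f y) ∧ ⟪u, x⟫ = f x := by
  simp only [subdiff, mem_ofPred_eq, ← EReal.coe_add, EReal.coe_le_coe_iff, inner_sub_right]
  refine ⟨fun h => ?_, fun ⟨hle, heq⟩ y => by linarith [hle y]⟩
  have h0 := h 0
  have h2 := h ((2 : ℝ) • x)
  rw [map_zero_of_homogeneous hf, inner_zero_right] at h0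
  rw [hf 2 zero_le_two, real_inner_smul_right] at h2
  have heq : ⟪u, x⟫ = f x := by linarith
  exact ⟨fun y => by linarith [h y], heq⟩

lemma fenchel_eq_zero_of_homogeneous (hf : ∀ c : ℝ, 0 ≤ c → ∀ x, f (c • x) = c * f x)
    {u : E} (hu : ∀ y, ⟪u, y⟫ ≤ f y) :
    fenchel (fun x => (f x : EReal)) u = 0 := by
  refine le_antisymm (iSup_le fun y => ?_) (le_iSup_of_le 0 ?_)
  · change ((⟪u, y⟫ : ℝ) : EReal) - (f y : EReal) ≤ 0
    exact_mod_cast sub_nonpos.mpr (hu y)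
  · simp [map_zero_of_homogeneous hf]

lemma fenchel_eq_top_of_homogeneous (hf : ∀ c : ℝ, 0 ≤ c → ∀ x, f (c • x) = c * f x)
    {u : E} (hu : ¬ ∀ y, ⟪u, y⟫ ≤ f y) :
    fenchel (fun x => (f x : EReal)) u = ⊤ := by
  push Not at hu
  obtain ⟨y, hy⟩ := hu
  rw [EReal.eq_top_iff_forall_lt]
  intro r
  obtain ⟨n, hn⟩ := exists_nat_gt (r / (⟪u, y⟫ - f y))
  refine lt_of_lt_of_le ?_ (le_iSup _ ((n : ℝ) • y))
  change (r : EReal) < ((⟪u, (n : ℝ) • y⟫ : ℝ) : EReal) - (f ((n : ℝ) • y) : EReal)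
  rw [real_inner_smul_right, hf n n.cast_nonneg, ← EReal.coe_sub, EReal.coe_lt_coe_iff]
  rw [div_lt_iff₀ (sub_pos.mpr hy)] at hn
  linarith

/-- `hsupp` makes `f` the support function of `∂f(0)`, with every supremum attained. -/
lemma mem_subdiff_fenchel_iff_of_homogeneous (hf : ∀ c : ℝ, 0 ≤ c → ∀ x, f (c • x) = c * f x)
    (hsupp : ∀ x, ∃ v, (∀ y, ⟪v, y⟫ ≤ f y) ∧ ⟪v, x⟫ = f x) {x u : E} :
    x ∈ subdiff (fenchel fun x => (f x : EReal)) u ↔ u ∈ subdiff (fun x => (f x : EReal)) x := by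
  rw [mem_subdiff_iff_of_homogeneous hf]
  constructor
  · intro hx
    have hu : ∀ y, ⟪u, y⟫ ≤ f y := by
      by_contra hu
      obtain ⟨v, hv, -⟩ := hsupp 0
      have := hx v
      rw [fenchel_eq_top_of_homogeneous hf hu, fenchel_eq_zero_of_homogeneous hf hv,
        EReal.top_add_coe] at this
      exact absurd this (by simp)
    obtain ⟨v, hv, hvx⟩ := hsupp x
    have := hx v
    rw [fenchel_eq_zero_of_homogeneous hf hu, fenchel_eq_zero_of_homogeneous hf hv, zero_add,
      EReal.coe_nonpos, inner_sub_right, real_inner_comm v x, real_inner_comm u x] at this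
    exact ⟨hu, le_antisymm (hu x) (by linarith)⟩
  · rintro ⟨hu, hux⟩ v
    by_cases hv : ∀ y, ⟪v, y⟫ ≤ f y
    · rw [fenchel_eq_zero_of_homogeneous hf hu, fenchel_eq_zero_of_homogeneous hf hv, zero_add,
        EReal.coe_nonpos, inner_sub_right, real_inner_comm v x, real_inner_comm u x]
      linarith [hv x]
    · rw [fenchel_eq_top_of_homogeneous hf hv]
      exact le_top

end Homogeneous

section IntrinsicInterior

variable {F : Type*} [NormedAddCommGroup F] [NormedSpace ℝ F] {s U : Set F} {x y : F}

lemma mem_intrinsicInterior_of_isOpen (hU : IsOpen U) (hxU : x ∈ U) (hxs : x ∈ s)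
    (hUs : U ∩ affineSpan ℝ s ⊆ s) : x ∈ intrinsicInterior ℝ s := by
  refine mem_intrinsicInterior.mpr ⟨⟨x, subset_affineSpan ℝ s hxs⟩, ?_, rfl⟩
  exact interior_maximal (fun (z : affineSpan ℝ s) hz => hUs ⟨hz, z.2⟩)
    (hU.preimage continuous_subtype_val) hxU

lemma notMem_intrinsicInterior_of_ray (hxs : x ∈ s) (hys : y ∈ s)
    (hray : ∀ t : ℝ, 0 < t → t • (x - y) + x ∉ s) : x ∉ intrinsicInterior ℝ s := by
  intro hx
  obtain ⟨z, hz, rfl⟩ := mem_intrinsicInterior.mp hx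
  let γ : ℝ → affineSpan ℝ s := fun t =>
    ⟨t • (z - y) + z, AffineSubspace.smul_vsub_vadd_mem _ t z.2 (subset_affineSpan ℝ s hys) z.2⟩
  have hγ : Continuous γ := by fun_prop
  have hγ0 : γ 0 = z := by ext; simp [γ]
  have hnear : ∀ᶠ t in 𝓝[>] (0 : ℝ), γ t ∈ interior (Subtype.val ⁻¹' s) :=
    ((hγ.tendsto 0).mono_left nhdsWithin_le_nhds).eventually
      (isOpen_interior.mem_nhds (hγ0 ▸ hz))
  obtain ⟨t, ht, htpos⟩ := (hnear.and self_mem_nhdsWithin).exists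
  have hts : γ t ∈ Subtype.val ⁻¹' s := interior_subset ht
  exact hray t htpos hts

lemma map_mem_of_mem_affineSpan {G : Type*} [AddCommGroup G] [Module ℝ G] (f : F →ᵃ[ℝ] G)
    {A : AffineSubspace ℝ G} (hs : ∀ y ∈ s, f y ∈ A) (hx : x ∈ affineSpan ℝ s) : f x ∈ A :=
  AffineSubspace.mem_comap.mp
    (affineSpan_le.mpr (fun y hy => AffineSubspace.mem_comap.mpr (hs y hy)) hx)

lemma map_eq_of_mem_affineSpan {G : Type*} [AddCommGroup G] [Module ℝ G] (f : F →ᵃ[ℝ] G)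
    {c : G} (hs : ∀ y ∈ s, f y = c) (hx : x ∈ affineSpan ℝ s) : f x = c :=
  (AffineSubspace.mem_affineSpan_singleton ℝ G).mp <| map_mem_of_mem_affineSpan f
    (fun y hy => (AffineSubspace.mem_affineSpan_singleton ℝ G).mpr (hs y hy)) hx

lemma mem_closure_of_add_smul_mem {w : F} (h : ∀ t ∈ Ioo (0 : ℝ) 1, x + t • w ∈ s) :
    x ∈ closure s := by
  have hcont : Continuous fun t : ℝ => x + t • w := by fun_prop
  have hlim : Tendsto (fun t : ℝ => x + t • w) (𝓝[>] 0) (𝓝 x) := by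
    simpa using (hcont.tendsto 0).mono_left nhdsWithin_le_nhds
  exact mem_closure_of_tendsto hlim (eventually_of_mem (Ioo_mem_nhdsGT (zero_lt_one' ℝ)) h)

end IntrinsicInterior

lemma fiber_injective {α ι : Type*} {D : Set α} {pat : α → ι}
    (hsurj : ∀ s, ∃ x ∈ D, pat x = s) {s t : ι} (h : {x ∈ D | pat x = s} = {x ∈ D | pat x = t}) : s = t := by
  obtain ⟨x, hxD, rfl⟩ := hsurj s
  exact (h.subset ⟨hxD, rfl⟩).2

section Fibers

variable {X ι : Type*} [NormedAddCommGroup X] {D : Set X} {pat : X → ι} {r : ι → ι → Prop}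

lemma stratLE_fiber_iff (hcl : ∀ s, ∀ x ∈ D, x ∈ closure {y ∈ D | pat y = s} ↔ r (pat x) s)
    {s t : ι} (hne : ∃ x ∈ D, pat x = t) :
    stratLE {x ∈ D | pat x = t} {x ∈ D | pat x = s} ↔ r t s := by
  obtain ⟨x, hxD, rfl⟩ := hne
  refine ⟨fun h => (hcl s x hxD).mp (h ⟨hxD, rfl⟩), fun h y ⟨hyD, hy⟩ => ?_⟩
  exact (hcl s y hyD).mpr (hy ▸ h)

lemma isStratification_fibers [Finite ι] (hsurj : ∀ s, ∃ x ∈ D, pat x = s)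
    (hcl : ∀ s, ∀ x ∈ D, x ∈ closure {y ∈ D | pat y = s} ↔ r (pat x) s) :
    IsStratification D (range fun s => {x ∈ D | pat x = s}) where
  finite := finite_range _
  nonempty := by
    rintro _ ⟨s, rfl⟩
    exact hsurj s
  cover := by
    ext x
    simp only [sUnion_range, mem_iUnion, mem_ofPred_eq]
    exact ⟨fun ⟨_, hx, _⟩ => hx, fun hx => ⟨pat x, hx, rfl⟩⟩
  pairwiseDisjoint := by
    rintro _ ⟨s, rfl⟩ _ ⟨t, rfl⟩ hne
    refine disjoint_left.mpr fun x ⟨_, hs⟩ ⟨_, ht⟩ => hne ?_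
    rw [← hs, ← ht]
  frontier_cond := by
    rintro _ ⟨t, rfl⟩ _ ⟨s, rfl⟩ ⟨x, ⟨hxD, rfl⟩, hx⟩
    exact (stratLE_fiber_iff hcl ⟨x, hxD, rfl⟩).mpr ((hcl s x hxD).mp hx)

end Fibers

section InnerNorm

variable {F : Type*} [NormedAddCommGroup F] [InnerProductSpace ℝ F] {v w : F}

lemma inner_le_norm_of_norm_le_one_s6 (hv : ‖v‖ ≤ 1) : ⟪v, w⟫ ≤ ‖w‖ :=
  (real_inner_le_norm v w).trans (mul_le_of_le_one_left (norm_nonneg w) hv)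

lemma norm_eq_one_of_inner_eq_norm (hv : ‖v‖ ≤ 1) (h : ⟪v, w⟫ = ‖w‖) (hw : w ≠ 0) :
    ‖v‖ = 1 := by
  have hcs := real_inner_le_norm v w
  have hpos := norm_pos_iff.mpr hw
  refine le_antisymm hv (le_of_mul_le_mul_right ?_ hpos)
  linarith

lemma eq_norm_smul_of_inner_eq_norm (hv : ‖v‖ = 1) (h : ⟪v, w⟫ = ‖w‖) : w = ‖w‖ • v := by
  have := inner_eq_norm_mul_iff_real.mp (by rw [h, hv, one_mul])
  rwa [hv, one_smul, eq_comm] at this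

lemma eq_inv_norm_smul_of_inner_eq_norm (hv : ‖v‖ ≤ 1) (h : ⟪v, w⟫ = ‖w‖) (hw : w ≠ 0) :
    v = ‖w‖⁻¹ • w := by
  have hw' := eq_norm_smul_of_inner_eq_norm (norm_eq_one_of_inner_eq_norm hv h hw) h
  rw [eq_inv_smul_iff₀ (norm_ne_zero_iff.mpr hw), ← hw']

lemma inner_eq_norm_of_mem_span_singleton (hv : ‖v‖ = 1) (hw : w ∈ ℝ ∙ v)
    (hpos : 0 ≤ ⟪v, w⟫) : ⟪v, w⟫ = ‖w‖ := by
  obtain ⟨c, rfl⟩ := Submodule.mem_span_singleton.mp hw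
  rw [real_inner_smul_right, real_inner_self_eq_norm_sq, hv, one_pow, mul_one] at hpos ⊢
  rw [norm_smul, hv, mul_one, Real.norm_of_nonneg hpos]

lemma inner_inv_norm_smul_self (w : F) : ⟪‖w‖⁻¹ • w, w⟫ = ‖w‖ := by
  rcases eq_or_ne w 0 with rfl | hw
  · simp
  · rw [real_inner_smul_left, real_inner_self_eq_norm_sq]
    field_simp

end InnerNorm

section L12

variable {N K : ℕ} (Bl : Fin N → Fin K)

-- `x^B` of the paper, padded with zeros to a vector of `ℝ^N`.
def blockProj (b : Fin K) : EuclideanSpace ℝ (Fin N) →ₗ[ℝ] EuclideanSpace ℝ (Fin N) where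
  toFun x := WithLp.toLp 2 fun i => if Bl i = b then x i else 0
  map_add' x y := by ext i; by_cases h : Bl i = b <;> simp [h]
  map_smul' c x := by ext i; by_cases h : Bl i = b <;> simp [h]

@[simp]
lemma blockProj_apply (b : Fin K) (x : EuclideanSpace ℝ (Fin N)) (i : Fin N) :
    blockProj Bl b x i = if Bl i = b then x i else 0 := rfl

lemma continuous_blockProj (b : Fin K) : Continuous (blockProj Bl b) :=
  (blockProj Bl b).continuous_of_finiteDimensional

lemma blockProj_blockProj (b b' : Fin K) (x : EuclideanSpace ℝ (Fin N)) :
    blockProj Bl b (blockProj Bl b' x) = if b = b' then blockProj Bl b x else 0 := by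
  ext i
  split_ifs with h <;> simp only [blockProj_apply] <;> split_ifs <;> simp_all

lemma blockProj_sum_blockProj (b : Fin K) (v : Fin K → EuclideanSpace ℝ (Fin N)) :
    blockProj Bl b (∑ b', blockProj Bl b' (v b')) = blockProj Bl b (v b) := by
  simp [map_sum, blockProj_blockProj]

lemma sum_blockProj (x : EuclideanSpace ℝ (Fin N)) : ∑ b, blockProj Bl b x = x := by
  ext i
  simp [WithLp.ofLp_sum, Finset.sum_apply]

lemma blockProj_eq_zero_iff {b : Fin K} {x : EuclideanSpace ℝ (Fin N)} :
    blockProj Bl b x = 0 ↔ ∀ i, Bl i = b → x i = 0 := by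
  refine ⟨fun h i hi => by simpa [hi] using congrArg (· i) h, fun h => ?_⟩
  ext i
  by_cases hi : Bl i = b <;> simp [hi, h]

lemma exists_blockProj_ne_zero {b : Fin K} (hb : ∃ i, Bl i = b) :
    ∃ e, blockProj Bl b e ≠ 0 := by
  obtain ⟨i, hi⟩ := hb
  refine ⟨EuclideanSpace.single i 1, fun h => ?_⟩
  simpa [hi] using (blockProj_eq_zero_iff Bl).mp h i hi

lemma blockNorm_eq_norm_blockProj (x : EuclideanSpace ℝ (Fin N)) (b : Fin K) :
    blockNorm Bl x b = ‖blockProj Bl b x‖ := by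
  simp [blockNorm, EuclideanSpace.norm_eq, Finset.sum_filter, apply_ite]

lemma inner_blockProj_left (b : Fin K) (x y : EuclideanSpace ℝ (Fin N)) :
    ⟪blockProj Bl b x, y⟫ = ⟪blockProj Bl b x, blockProj Bl b y⟫ := by
  simp only [PiLp.inner_apply, blockProj_apply]
  refine Finset.sum_congr rfl fun i _ => ?_
  split_ifs <;> simp

lemma inner_eq_sum_inner_blockProj (x y : EuclideanSpace ℝ (Fin N)) :
    ⟪x, y⟫ = ∑ b, ⟪blockProj Bl b x, blockProj Bl b y⟫ := by
  conv_lhs => rw [← sum_blockProj Bl x]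
  rw [sum_inner]
  exact Finset.sum_congr rfl fun b _ => inner_blockProj_left Bl b x y

lemma l12Norm_eq_sum_norm (x : EuclideanSpace ℝ (Fin N)) :
    l12Norm Bl x = ∑ b, ‖blockProj Bl b x‖ := by
  simp only [l12Norm, blockNorm_eq_norm_blockProj]

lemma l12Norm_smul_of_nonneg (c : ℝ) (hc : 0 ≤ c) (x : EuclideanSpace ℝ (Fin N)) :
    l12Norm Bl (c • x) = c * l12Norm Bl x := by
  simp [l12Norm_eq_sum_norm, norm_smul, Finset.mul_sum, abs_of_nonneg hc]

lemma l12Norm_blockProj (b : Fin K) (x : EuclideanSpace ℝ (Fin N)) :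
    l12Norm Bl (blockProj Bl b x) = ‖blockProj Bl b x‖ := by
  simp [l12Norm_eq_sum_norm, blockProj_blockProj, apply_ite]

lemma inner_le_l12Norm_iff {u : EuclideanSpace ℝ (Fin N)} :
    (∀ y, ⟪u, y⟫ ≤ l12Norm Bl y) ↔ ∀ b, ‖blockProj Bl b u‖ ≤ 1 := by
  refine ⟨fun h b => ?_, fun h y => ?_⟩
  · have hb := h (blockProj Bl b u)
    rw [l12Norm_blockProj, real_inner_comm, inner_blockProj_left, real_inner_self_eq_norm_sq]
      at hb
    nlinarith [norm_nonneg (blockProj Bl b u)]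
  · rw [inner_eq_sum_inner_blockProj Bl, l12Norm_eq_sum_norm]
    exact Finset.sum_le_sum fun b _ => inner_le_norm_of_norm_le_one_s6 (h b)

lemma mem_subdiff_l12Norm_iff {x u : EuclideanSpace ℝ (Fin N)} :
    u ∈ subdiff (fun x => (l12Norm Bl x : EReal)) x ↔
      ∀ b, ‖blockProj Bl b u‖ ≤ 1 ∧
        ⟪blockProj Bl b u, blockProj Bl b x⟫ = ‖blockProj Bl b x‖ := by
  rw [mem_subdiff_iff_of_homogeneous (l12Norm_smul_of_nonneg Bl), inner_le_l12Norm_iff,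
    forall_and, inner_eq_sum_inner_blockProj Bl, l12Norm_eq_sum_norm]
  refine and_congr_right fun hu => ?_
  rw [Finset.sum_eq_sum_iff_of_le fun b _ => inner_le_norm_of_norm_le_one_s6 (hu b)]
  simp

def blockSupport (x : EuclideanSpace ℝ (Fin N)) (b : Fin K) : Bool :=
  decide (blockProj Bl b x ≠ 0)

def saturatedBlocks (u : EuclideanSpace ℝ (Fin N)) (b : Fin K) : Bool :=
  decide (‖blockProj Bl b u‖ = 1)

-- The unit ball of the dual norm `max_B ‖u^B‖₂`.
def l12DualBall : Set (EuclideanSpace ℝ (Fin N)) :=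
  {u | ∀ b, ‖blockProj Bl b u‖ ≤ 1}

lemma mem_l12DualBall_of_mem_subdiff {x u : EuclideanSpace ℝ (Fin N)}
    (hu : u ∈ subdiff (fun x => (l12Norm Bl x : EReal)) x) : u ∈ l12DualBall Bl :=
  fun b => ((mem_subdiff_l12Norm_iff Bl).mp hu b).1

lemma blockSupport_le_saturatedBlocks {x u : EuclideanSpace ℝ (Fin N)}
    (hu : u ∈ subdiff (fun x => (l12Norm Bl x : EReal)) x) :
    blockSupport Bl x ≤ saturatedBlocks Bl u := by
  rw [mem_subdiff_l12Norm_iff] at hu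
  intro b
  simpa [blockSupport, saturatedBlocks, Bool.le_iff_imp] using
    norm_eq_one_of_inner_eq_norm (hu b).1 (hu b).2

lemma saturatedBlocks_eq_blockSupport_iff {x u : EuclideanSpace ℝ (Fin N)}
    (hu : u ∈ subdiff (fun x => (l12Norm Bl x : EReal)) x) :
    saturatedBlocks Bl u = blockSupport Bl x ↔
      ∀ b, ‖blockProj Bl b u‖ = 1 → blockProj Bl b x ≠ 0 := by
  refine ⟨fun h b hb => ?_,
    fun h => le_antisymm (fun b => ?_) (blockSupport_le_saturatedBlocks Bl hu)⟩
  · simpa [blockSupport, saturatedBlocks, hb] using congrFun h b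
  · simpa [blockSupport, saturatedBlocks, Bool.le_iff_imp] using h b

lemma exists_mem_subdiff_l12Norm (x : EuclideanSpace ℝ (Fin N)) :
    ∃ u ∈ subdiff (fun x => (l12Norm Bl x : EReal)) x,
      saturatedBlocks Bl u = blockSupport Bl x := by
  refine ⟨∑ b, blockProj Bl b (‖blockProj Bl b x‖⁻¹ • x), ?_⟩
  have hblock : ∀ b, blockProj Bl b (∑ b, blockProj Bl b (‖blockProj Bl b x‖⁻¹ • x)) =
      ‖blockProj Bl b x‖⁻¹ • blockProj Bl b x := fun b => by
    rw [blockProj_sum_blockProj, map_smul]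
  have hmem : ∑ b, blockProj Bl b (‖blockProj Bl b x‖⁻¹ • x) ∈
      subdiff (fun x => (l12Norm Bl x : EReal)) x := by
    rw [mem_subdiff_l12Norm_iff]
    intro b
    rw [hblock]
    refine ⟨?_, inner_inv_norm_smul_self _⟩
    rcases eq_or_ne (blockProj Bl b x) 0 with h | h
    · simp [h]
    · exact (norm_smul_inv_norm h).le
  refine ⟨hmem, (saturatedBlocks_eq_blockSupport_iff Bl hmem).mpr fun b hb h => ?_⟩
  rw [hblock, h, smul_zero, norm_zero] at hb
  exact zero_ne_one hb

lemma exists_subdiff_l12Norm_mem {u : EuclideanSpace ℝ (Fin N)} (hu : u ∈ l12DualBall Bl) :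
    ∃ x, u ∈ subdiff (fun x => (l12Norm Bl x : EReal)) x ∧
      saturatedBlocks Bl u = blockSupport Bl x := by
  refine ⟨∑ b, blockProj Bl b (if ‖blockProj Bl b u‖ = 1 then u else 0), ?_⟩
  have hblock : ∀ b,
      blockProj Bl b (∑ b, blockProj Bl b (if ‖blockProj Bl b u‖ = 1 then u else 0)) =
        if ‖blockProj Bl b u‖ = 1 then blockProj Bl b u else 0 := fun b => by
    rw [blockProj_sum_blockProj, apply_ite (blockProj Bl b), map_zero]
  have hmem : u ∈ subdiff (fun x => (l12Norm Bl x : EReal))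
      (∑ b, blockProj Bl b (if ‖blockProj Bl b u‖ = 1 then u else 0)) := by
    rw [mem_subdiff_l12Norm_iff]
    intro b
    refine ⟨hu b, ?_⟩
    rw [hblock]
    split_ifs with h
    · rw [real_inner_self_eq_norm_sq, h, one_pow]
    · simp
  refine ⟨hmem, (saturatedBlocks_eq_blockSupport_iff Bl hmem).mpr fun b hb => ?_⟩
  rw [hblock, if_pos hb, ← norm_ne_zero_iff, hb]
  exact one_ne_zero

lemma subdiff_fenchel_l12Norm (u : EuclideanSpace ℝ (Fin N)) :
    subdiff (fenchel fun x => (l12Norm Bl x : EReal)) u =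
      {x | u ∈ subdiff (fun x => (l12Norm Bl x : EReal)) x} := by
  ext x
  refine mem_subdiff_fenchel_iff_of_homogeneous (l12Norm_smul_of_nonneg Bl) (fun x => ?_)
  obtain ⟨v, hv, -⟩ := exists_mem_subdiff_l12Norm Bl x
  exact ⟨v, (mem_subdiff_iff_of_homogeneous (l12Norm_smul_of_nonneg Bl)).mp hv⟩

lemma blockProj_eq_of_mem_affineSpan_subdiff_l12Norm {x v : EuclideanSpace ℝ (Fin N)}
    (hv : v ∈ affineSpan ℝ (subdiff (fun x => (l12Norm Bl x : EReal)) x)) {b : Fin K}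
    (hx : blockProj Bl b x ≠ 0) :
    blockProj Bl b v = ‖blockProj Bl b x‖⁻¹ • blockProj Bl b x :=
  map_eq_of_mem_affineSpan (blockProj Bl b).toAffineMap (fun _ hy =>
    have hy := (mem_subdiff_l12Norm_iff Bl).mp hy b
    eq_inv_norm_smul_of_inner_eq_norm hy.1 hy.2 hx) hv

lemma blockProj_mem_span_of_mem_affineSpan_subdiff_fenchel_l12Norm
    {u z : EuclideanSpace ℝ (Fin N)}
    (hz : z ∈ affineSpan ℝ (subdiff (fenchel fun x => (l12Norm Bl x : EReal)) u)) {b : Fin K}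
    (hb : ‖blockProj Bl b u‖ = 1) :
    blockProj Bl b z ∈ ℝ ∙ blockProj Bl b u := by
  rw [subdiff_fenchel_l12Norm] at hz
  refine map_mem_of_mem_affineSpan (A := (ℝ ∙ blockProj Bl b u).toAffineSubspace)
    (blockProj Bl b).toAffineMap (fun y hy => ?_) hz
  rw [mem_ofPred_eq, mem_subdiff_l12Norm_iff] at hy
  exact Submodule.mem_span_singleton.mpr ⟨_, (eq_norm_smul_of_inner_eq_norm hb (hy b).2).symm⟩

lemma blockProj_eq_zero_of_mem_affineSpan_subdiff_fenchel_l12Norm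
    {u z : EuclideanSpace ℝ (Fin N)}
    (hz : z ∈ affineSpan ℝ (subdiff (fenchel fun x => (l12Norm Bl x : EReal)) u)) {b : Fin K}
    (hb : ‖blockProj Bl b u‖ ≠ 1) :
    blockProj Bl b z = 0 := by
  rw [subdiff_fenchel_l12Norm] at hz
  refine map_eq_of_mem_affineSpan (blockProj Bl b).toAffineMap (fun y hy => ?_) hz
  rw [mem_ofPred_eq, mem_subdiff_l12Norm_iff] at hy
  by_contra h
  exact hb (norm_eq_one_of_inner_eq_norm (hy b).1 (hy b).2 h)

lemma mem_intrinsicInterior_subdiff_l12Norm {x u : EuclideanSpace ℝ (Fin N)} :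
    u ∈ intrinsicInterior ℝ (subdiff (fun x => (l12Norm Bl x : EReal)) x) ↔
      u ∈ subdiff (fun x => (l12Norm Bl x : EReal)) x ∧
        saturatedBlocks Bl u = blockSupport Bl x := by
  constructor
  · intro hri
    have hu := intrinsicInterior_subset hri
    refine ⟨hu, (saturatedBlocks_eq_blockSupport_iff Bl hu).mpr fun b hb hx => ?_⟩
    -- deleting block `b` of `u` stays in `∂R x`, pushing it outward leaves the unit ball
    refine notMem_intrinsicInterior_of_ray (y := u - blockProj Bl b u) hu ?_
      (fun t ht h => ?_) hri
    · rw [mem_subdiff_l12Norm_iff] at hu ⊢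
      intro b'
      rw [map_sub, blockProj_blockProj]
      split_ifs with h
      · simp [h, hx]
      · simpa using hu b'
    · have hblock : blockProj Bl b (t • (u - (u - blockProj Bl b u)) + u) =
          (t + 1) • blockProj Bl b u := by
        simp [blockProj_blockProj, add_smul]
      have h1 := ((mem_subdiff_l12Norm_iff Bl).mp h b).1
      rw [hblock, norm_smul, hb, Real.norm_of_nonneg (by positivity)] at h1
      linarith
  · rintro ⟨hu, hsat⟩
    rw [saturatedBlocks_eq_blockSupport_iff Bl hu] at hsat
    have hu' := (mem_subdiff_l12Norm_iff Bl).mp hu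
    refine mem_intrinsicInterior_of_isOpen
      (U := {v | ∀ b, blockProj Bl b x = 0 → ‖blockProj Bl b v‖ < 1}) ?_
      (fun b hx => (hu' b).1.lt_of_ne fun h => hsat b h hx) hu ?_
    · simp only [ofPred_forall]
      exact isOpen_iInter_of_finite fun b => isOpen_iInter_of_finite fun _ =>
        isOpen_lt (continuous_blockProj Bl b).norm continuous_const
    rintro v ⟨hvU, hvA⟩
    rw [mem_subdiff_l12Norm_iff]
    intro b
    rcases eq_or_ne (blockProj Bl b x) 0 with hx | hx
    · simp [hx, (hvU b hx).le]
    · rw [blockProj_eq_of_mem_affineSpan_subdiff_l12Norm Bl hvA hx]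
      exact ⟨(norm_smul_inv_norm hx).le, inner_inv_norm_smul_self _⟩

lemma mem_intrinsicInterior_subdiff_fenchel_l12Norm {x u : EuclideanSpace ℝ (Fin N)} :
    x ∈ intrinsicInterior ℝ (subdiff (fenchel fun x => (l12Norm Bl x : EReal)) u) ↔
      u ∈ subdiff (fun x => (l12Norm Bl x : EReal)) x ∧
        saturatedBlocks Bl u = blockSupport Bl x := by
  constructor
  · intro hri
    rw [subdiff_fenchel_l12Norm] at hri
    have hx := intrinsicInterior_subset hri
    have hu : u ∈ subdiff (fun x => (l12Norm Bl x : EReal)) x := hx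
    refine ⟨hu, (saturatedBlocks_eq_blockSupport_iff Bl hu).mpr fun b hb hx0 => ?_⟩
    -- filling block `b` of `x` with `u^B` keeps `u` a subgradient, reversing it does not
    refine notMem_intrinsicInterior_of_ray (y := x + blockProj Bl b u) hx ?_
      (fun t ht h => ?_) hri
    · rw [mem_ofPred_eq, mem_subdiff_l12Norm_iff]
      intro b'
      rw [map_add, blockProj_blockProj]
      split_ifs with h
      · simp [h, hx0, hb]
      · simpa using (mem_subdiff_l12Norm_iff Bl).mp hu b'
    · have hblock : blockProj Bl b (t • (x - (x + blockProj Bl b u)) + x) =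
          (-t) • blockProj Bl b u := by
        simp [blockProj_blockProj, hx0]
      rw [mem_ofPred_eq, mem_subdiff_l12Norm_iff] at h
      have h1 := (h b).2
      rw [hblock, real_inner_smul_right, real_inner_self_eq_norm_sq, norm_smul, hb,
        Real.norm_eq_abs, abs_neg, abs_of_pos ht] at h1
      linarith
  · rintro ⟨hu, hsat⟩
    rw [saturatedBlocks_eq_blockSupport_iff Bl hu] at hsat
    have hu' := (mem_subdiff_l12Norm_iff Bl).mp hu
    have hx : x ∈ subdiff (fenchel fun x => (l12Norm Bl x : EReal)) u := by
      rwa [subdiff_fenchel_l12Norm]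
    refine mem_intrinsicInterior_of_isOpen
      (U := {z | ∀ b, ‖blockProj Bl b u‖ = 1 → 0 < ⟪blockProj Bl b u, blockProj Bl b z⟫}) ?_
      (fun b hb => (hu' b).2 ▸ norm_pos_iff.mpr (hsat b hb)) hx ?_
    · simp only [ofPred_forall]
      exact isOpen_iInter_of_finite fun b => isOpen_iInter_of_finite fun _ =>
        isOpen_lt continuous_const (continuous_const.inner (continuous_blockProj Bl b))
    rintro z ⟨hzU, hzA⟩
    rw [subdiff_fenchel_l12Norm, mem_ofPred_eq, mem_subdiff_l12Norm_iff]
    intro b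
    refine ⟨(hu' b).1, ?_⟩
    by_cases hb : ‖blockProj Bl b u‖ = 1
    · exact inner_eq_norm_of_mem_span_singleton hb
        (blockProj_mem_span_of_mem_affineSpan_subdiff_fenchel_l12Norm Bl hzA hb) (hzU b hb).le
    · simp [blockProj_eq_zero_of_mem_affineSpan_subdiff_fenchel_l12Norm Bl hzA hb]

lemma l12PrimalStrat_eq :
    l12PrimalStrat Bl = range fun s => {x ∈ univ | blockSupport Bl x = s} := by
  ext M
  refine exists_congr fun s => (Eq.congr_right (ext fun x => ?_)).trans eq_comm
  simp only [mem_ofPred_eq, mem_univ, true_and, funext_iff, blockSupport]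
  refine forall_congr' fun b => ?_
  cases s b <;> simp [blockProj_eq_zero_iff]

lemma l12DualStrat_eq :
    l12DualStrat Bl = range fun s => {u ∈ l12DualBall Bl | saturatedBlocks Bl u = s} := by
  ext M
  refine exists_congr fun s => (Eq.congr_right (ext fun u => ?_)).trans eq_comm
  simp only [mem_ofPred_eq, l12DualBall, funext_iff, saturatedBlocks, blockNorm_eq_norm_blockProj,
    ← forall_and]
  refine forall_congr' fun b => ?_
  cases s b <;> simp +contextual [lt_iff_le_and_ne]

lemma corrOp_blockSupport_fiber (s : Fin K → Bool) :
    corrOp (fun x => (l12Norm Bl x : EReal)) {x ∈ univ | blockSupport Bl x = s} =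
      {u ∈ l12DualBall Bl | saturatedBlocks Bl u = s} := by
  ext u
  simp only [corrOp, mem_iUnion, mem_intrinsicInterior_subdiff_l12Norm, exists_prop,
    mem_ofPred_eq, mem_univ, true_and]
  constructor
  · rintro ⟨x, rfl, hu, hsat⟩
    exact ⟨mem_l12DualBall_of_mem_subdiff Bl hu, hsat⟩
  · rintro ⟨hu, rfl⟩
    obtain ⟨x, hx, hsat⟩ := exists_subdiff_l12Norm_mem Bl hu
    exact ⟨x, hsat.symm, hx, hsat⟩

lemma corrOp_saturatedBlocks_fiber (s : Fin K → Bool) :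
    corrOp (fenchel fun x => (l12Norm Bl x : EReal))
        {u ∈ l12DualBall Bl | saturatedBlocks Bl u = s} =
      {x ∈ univ | blockSupport Bl x = s} := by
  ext x
  simp only [corrOp, mem_iUnion, mem_intrinsicInterior_subdiff_fenchel_l12Norm, exists_prop,
    mem_ofPred_eq, mem_univ, true_and]
  constructor
  · rintro ⟨u, ⟨-, rfl⟩, -, hsat⟩
    exact hsat.symm
  · rintro rfl
    obtain ⟨u, hu, hsat⟩ := exists_mem_subdiff_l12Norm Bl x
    exact ⟨u, ⟨mem_l12DualBall_of_mem_subdiff Bl hu, hsat⟩, hu, hsat⟩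

lemma domSubdiff_l12Norm : domSubdiff (fun x => (l12Norm Bl x : EReal)) = univ :=
  eq_univ_of_forall fun x =>
    let ⟨u, hu, _⟩ := exists_mem_subdiff_l12Norm Bl x
    ⟨u, hu⟩

lemma domSubdiff_fenchel_l12Norm :
    domSubdiff (fenchel fun x => (l12Norm Bl x : EReal)) = l12DualBall Bl := by
  ext u
  simp only [domSubdiff, subdiff_fenchel_l12Norm, Set.Nonempty, mem_ofPred_eq]
  refine ⟨fun ⟨x, hu⟩ => mem_l12DualBall_of_mem_subdiff Bl hu, fun hu => ?_⟩
  obtain ⟨x, hx, -⟩ := exists_subdiff_l12Norm_mem Bl hu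
  exact ⟨x, hx⟩

lemma blockSupport_le_iff {x : EuclideanSpace ℝ (Fin N)} {s : Fin K → Bool} :
    blockSupport Bl x ≤ s ↔ ∀ b, s b = false → blockProj Bl b x = 0 := by
  simp only [Pi.le_def, Bool.le_iff_imp, blockSupport]
  refine forall_congr' fun b => ?_
  cases s b <;> simp

lemma le_saturatedBlocks_iff {u : EuclideanSpace ℝ (Fin N)} {s : Fin K → Bool} :
    s ≤ saturatedBlocks Bl u ↔ ∀ b, s b = true → ‖blockProj Bl b u‖ = 1 := by
  simp [Pi.le_def, Bool.le_iff_imp, saturatedBlocks]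

lemma exists_blockSupport_eq (hBl : Function.Surjective Bl) (s : Fin K → Bool) :
    ∃ x, blockSupport Bl x = s := by
  choose e he using fun b => exists_blockProj_ne_zero Bl (hBl b)
  refine ⟨∑ b, blockProj Bl b (if s b then e b else 0), funext fun b => ?_⟩
  rw [blockSupport, blockProj_sum_blockProj]
  cases s b <;> simp [he b]

lemma exists_saturatedBlocks_eq (hBl : Function.Surjective Bl) (s : Fin K → Bool) :
    ∃ u ∈ l12DualBall Bl, saturatedBlocks Bl u = s := by
  obtain ⟨x, rfl⟩ := exists_blockSupport_eq Bl hBl s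
  obtain ⟨u, hu, hsat⟩ := exists_mem_subdiff_l12Norm Bl x
  exact ⟨u, mem_l12DualBall_of_mem_subdiff Bl hu, hsat⟩

lemma mem_closure_blockSupport_fiber (hBl : Function.Surjective Bl) (s : Fin K → Bool)
    (x : EuclideanSpace ℝ (Fin N)) :
    x ∈ closure {y ∈ univ | blockSupport Bl y = s} ↔ blockSupport Bl x ≤ s := by
  constructor
  · have hclosed : IsClosed {y : EuclideanSpace ℝ (Fin N) | blockSupport Bl y ≤ s} := by
      simp only [blockSupport_le_iff, ofPred_forall]
      exact isClosed_iInter fun b => isClosed_iInter fun _ =>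
        isClosed_eq (continuous_blockProj Bl b) continuous_const
    exact fun hx => closure_minimal (fun y hy => hy.2.le) hclosed hx
  · intro hx
    rw [blockSupport_le_iff] at hx
    choose e he using fun b => exists_blockProj_ne_zero Bl (hBl b)
    -- switch on the missing blocks of the pattern `s`
    refine mem_closure_of_add_smul_mem
      (w := ∑ b, blockProj Bl b (if s b ∧ blockProj Bl b x = 0 then e b else 0))
      fun t ht => ⟨mem_univ _, funext fun b => ?_⟩
    have hblock : blockProj Bl b (x + t • ∑ b, blockProj Bl b
        (if s b ∧ blockProj Bl b x = 0 then e b else 0)) = blockProj Bl b x +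
          t • if s b ∧ blockProj Bl b x = 0 then blockProj Bl b (e b) else 0 := by
      rw [map_add, map_smul, blockProj_sum_blockProj, apply_ite (blockProj Bl b), map_zero]
    simp only [blockSupport, hblock]
    by_cases hs : s b <;> by_cases h0 : blockProj Bl b x = 0 <;>
      simp [hs, h0, ht.1.ne', he b, hx b]

lemma mem_closure_saturatedBlocks_fiber (s : Fin K → Bool) {u : EuclideanSpace ℝ (Fin N)}
    (hu : u ∈ l12DualBall Bl) :
    u ∈ closure {v ∈ l12DualBall Bl | saturatedBlocks Bl v = s} ↔ s ≤ saturatedBlocks Bl u := by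
  constructor
  · have hclosed : IsClosed {v : EuclideanSpace ℝ (Fin N) | s ≤ saturatedBlocks Bl v} := by
      simp only [le_saturatedBlocks_iff, ofPred_forall]
      exact isClosed_iInter fun b => isClosed_iInter fun _ =>
        isClosed_eq (continuous_blockProj Bl b).norm continuous_const
    exact fun hx => closure_minimal (fun v hv => hv.2.ge) hclosed hx
  · intro hs
    rw [le_saturatedBlocks_iff] at hs
    -- shrink the blocks outside the pattern `s` into the open unit ball
    refine mem_closure_of_add_smul_mem
      (w := -∑ b, blockProj Bl b (if s b then 0 else u)) fun t ht => ?_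
    have hblock : ∀ b,
        blockProj Bl b (u + t • -∑ b, blockProj Bl b (if s b then 0 else u)) =
          (if s b then 1 else 1 - t) • blockProj Bl b u := fun b => by
      rw [map_add, map_smul, map_neg, blockProj_sum_blockProj]
      split_ifs
      · simp
      · module
    have hnorm : ∀ b, ‖(1 - t) • blockProj Bl b u‖ < 1 := fun b => by
      rw [norm_smul, Real.norm_of_nonneg (by linarith [ht.2])]
      have := mul_le_mul_of_nonneg_left (hu b : ‖blockProj Bl b u‖ ≤ 1) (sub_nonneg.2 ht.2.le)
      linarith [ht.1]
    refine ⟨fun b => ?_, funext fun b => ?_⟩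
    · rw [hblock]
      split_ifs
      · simpa using hu b
      · exact (hnorm b).le
    · simp only [saturatedBlocks, hblock]
      split_ifs with h
      · simp [hs b h, h]
      · simp [h, (hnorm b).ne]

end L12

/-- Section 2.3.4: the `ℓ_{1,2}` norm associated with a partition of
`{1,…,N}` into `K` nonempty blocks is mirror-stratifiable w.r.t. the product
stratifications built from `{0}` / complement-of-`{0}` per block (primal) and unit
sphere / open unit ball per block (dual). -/
theorem l12_mirror_stratifiable {N K : ℕ} (Bl : Fin N → Fin K)
    (hBl : Function.Surjective Bl) :
    IsMirrorStratifiable (fun x : EuclideanSpace ℝ (Fin N) => ((l12Norm Bl x : ℝ) : EReal))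
      (l12PrimalStrat Bl) (l12DualStrat Bl) := by
  have hP : ∀ s, ∃ x ∈ univ, blockSupport Bl x = s := by
    simpa using exists_blockSupport_eq Bl hBl
  have hD := exists_saturatedBlocks_eq Bl hBl
  have hclP := fun s (x : EuclideanSpace ℝ (Fin N)) (_ : x ∈ univ) =>
    mem_closure_blockSupport_fiber Bl hBl s x
  have hclD := fun s (u : EuclideanSpace ℝ (Fin N)) (hu : u ∈ l12DualBall Bl) =>
    mem_closure_saturatedBlocks_fiber Bl s hu
  rw [l12PrimalStrat_eq, l12DualStrat_eq]
  refine ⟨?_, ?_, ?_, ?_, ?_, ?_⟩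
  · rw [domSubdiff_l12Norm]
    exact isStratification_fibers hP hclP
  · rw [domSubdiff_fenchel_l12Norm]
    exact isStratification_fibers (r := fun t s => s ≤ t) hD hclD
  · rintro _ ⟨s, rfl⟩
    exact ⟨s, (corrOp_blockSupport_fiber Bl s).symm⟩
  · rintro _ ⟨s, rfl⟩
    exact ⟨s, (corrOp_saturatedBlocks_fiber Bl s).symm⟩
  · rintro _ ⟨s, rfl⟩ _ ⟨t, rfl⟩
    rw [corrOp_blockSupport_fiber, corrOp_saturatedBlocks_fiber]
    exact ⟨fun h => by rw [fiber_injective hD h], fun h => by rw [fiber_injective hP h]⟩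
  · rintro _ ⟨t, rfl⟩ _ ⟨s, rfl⟩
    rw [corrOp_blockSupport_fiber, corrOp_blockSupport_fiber, stratLE_fiber_iff hclP (hP t),
      stratLE_fiber_iff (r := fun t s => s ≤ t) hclD (hD s)]

end
end

section
/- Consider the parametric problem min_{x∈ℝ^N} E(x,p) = F(x,p) + R(x) with parameter p in an open subset Π of a finite-dimensional linear space, where F(·,p) is convex and C¹ on ℝ^N for each p, and R: ℝ^N → ℝ ∪ {+∞} is proper, lower semicontinuous and convex. Let p₀ ∈ Π and assume: (i) E(·,p₀) has a unique minimizer x⋆(p₀); (ii) E is lower semicontinuous on ℝ^N × Π; (iii) E(x⋆(p₀),·) is continuous at p₀; (iv) ∇F is continuous at (x⋆(p₀), p₀); (v) E is level-bounded in x locally uniformly in p around p₀. Assume in addition the quadratic growth condition: there exist a neighbourhood V of x⋆(p₀) and κ > 0 with E(x,p₀) ≥ E(x⋆(p₀),p₀) + κ‖x − x⋆(p₀)‖² for all x ∈ V, and that ∇F(x,·) is Lipschitz continuous in a neighbourhood of p₀ with a Lipschitz constant ν independent of x ∈ V. Then for any sequence p_k → p₀ and any minimizers x⋆_k of E(·,p_k),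 one has for all k large enough ‖x⋆_k − x⋆(p₀)‖ ≤ (ν/κ)‖p_k − p₀‖; in particular d(x⋆(p₀), Argmin E(·,p_k)) ≤ (ν/κ)‖p_k − p₀‖. -/
open Filter Topology Set Pointwise

noncomputable section

variable {E : Type*} [NormedAddCommGroup E] [InnerProductSpace ℝ E]

/-- The composite parametric objective `E(x,p) = F(x,p) + R(x)`. -/
def compObj {N : ℕ} {Q : Type*} (F : EuclideanSpace ℝ (Fin N) → Q → ℝ)
    (R : EuclideanSpace ℝ (Fin N) → EReal) (x : EuclideanSpace ℝ (Fin N)) (p : Q) : EReal :=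
  ((F x p : ℝ) : EReal) + R x

/-!
The minimizers `x_k` of `E(·, p_k)` eventually lie in one bounded sublevel set, so they cluster;
lower semicontinuity of `E` and continuity of `E(x⋆, ·)` make every cluster point a minimizer of
`E(·, p₀)`, hence `x_k → x⋆`. Once `x_k` is in the ball where growth and the Lipschitz bound hold,
adding quadratic growth at `p₀` to optimality at `p_k` cancels `R` and gives
`κ‖x_k − x⋆‖² ≤ h(x_k) − h(x⋆)` for `h = F(·, p₀) − F(·, p_k)`. The gradient of `h` has norm at
most `ν‖p_k − p₀‖` on the ball, so the mean value inequality bounds the right-hand side by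
`ν‖p_k − p₀‖‖x_k − x⋆‖`.
-/

section Gradient

variable [CompleteSpace E]

theorem HasGradientAt.sub {f g : E → ℝ} {f' g' x : E} (hf : HasGradientAt f f' x)
    (hg : HasGradientAt g g' x) : HasGradientAt (fun z => f z - g z) (f' - g') x := by
  rw [hasGradientAt_iff_hasFDerivAt, map_sub]
  exact hf.hasFDerivAt.sub hg.hasFDerivAt

theorem Convex.norm_image_sub_le_of_norm_hasGradientAt_le {f : E → ℝ} {f' : E → E} {s : Set E}
    {C : ℝ} (hf : ∀ x ∈ s, HasGradientAt f (f' x) x) (bound : ∀ x ∈ s, ‖f' x‖ ≤ C)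
    (hs : Convex ℝ s) {x y : E} (hx : x ∈ s) (hy : y ∈ s) : ‖f y - f x‖ ≤ C * ‖y - x‖ :=
  hs.norm_image_sub_le_of_norm_hasFDerivWithin_le
    (fun z hz => (hf z hz).hasFDerivAt.hasFDerivWithinAt) (fun z hz => by simpa using bound z hz)
    hx hy

end Gradient

theorem norm_sub_le_div_of_quadratic_growth {G : Type*} [SeminormedAddCommGroup G]
    {φ₀ φ : G → ℝ} {x x' : G} {κ C : ℝ} (hκ : 0 < κ) (hC : 0 ≤ C)
    (hgrowth : φ₀ x' + κ * ‖x - x'‖ ^ 2 ≤ φ₀ x) (hopt : φ x ≤ φ x')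
    (hlip : ‖(φ₀ x - φ x) - (φ₀ x' - φ x')‖ ≤ C * ‖x - x'‖) : ‖x - x'‖ ≤ C / κ := by
  have hquad : κ * ‖x - x'‖ ^ 2 ≤ C * ‖x - x'‖ := by
    linarith [(Real.le_norm_self _).trans hlip]
  rw [le_div_iff₀ hκ]
  rcases (norm_nonneg (x - x')).eq_or_lt with hzero | hpos
  · rw [← hzero, zero_mul]
    exact hC
  · nlinarith

section Stability

variable {ι : Type*}

theorem MapClusterPt.prodMk {X Y : Type*} [TopologicalSpace X] [TopologicalSpace Y]
    {l : Filter ι} {u : ι → X} {v : ι → Y} {x : X} {y : Y} (hu : MapClusterPt x l u)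
    (hv : Tendsto v l (𝓝 y)) :
    MapClusterPt (x, y) l (fun i => (u i, v i)) := by
  rw [((𝓝 x).basis_sets.prod_nhds (𝓝 y).basis_sets).mapClusterPt_iff_frequently]
  rintro ⟨s, t⟩ ⟨hs, ht⟩
  exact ((mapClusterPt_iff_frequently.1 hu s hs).and_eventually (hv ht)).mono fun _ h => h

theorem LowerSemicontinuousWithinAt.le_of_mapClusterPt {Y α : Type*} [TopologicalSpace Y]
    [LinearOrder α] [TopologicalSpace α] [OrderTopology α] [DenselyOrdered α]
    {f : Y → α} {t : Set Y} {y : Y} (hf : LowerSemicontinuousWithinAt f t y) {l : Filter ι}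
    {u : ι → Y} (hu : MapClusterPt y l u) (hut : ∀ᶠ i in l, u i ∈ t) {v : ι → α} {c : α}
    (huv : ∀ᶠ i in l, f (u i) ≤ v i) (hv : Tendsto v l (𝓝 c)) : f y ≤ c := by
  by_contra! hlt
  obtain ⟨c', hc, hc'⟩ := exists_between hlt
  obtain ⟨U, hU, hUt⟩ := mem_nhdsWithin_iff_exists_mem_nhds_inter.1 (hf c' hc')
  obtain ⟨i, hiU, hit, hle, hvi⟩ :=
    ((mapClusterPt_iff_frequently.1 hu U hU).and_eventually
      (hut.and (huv.and (hv.eventually_lt_const hc)))).exists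
  exact (hUt ⟨hiU, hit⟩).not_ge (hle.trans hvi.le)

theorem tendsto_of_unique_minimizer {X P : Type*} [PseudoMetricSpace X] [ProperSpace X]
    [TopologicalSpace P] {f : X × P → EReal} {s : Set P} {p₀ : P} (hp₀ : p₀ ∈ s)
    {x₀ : X} (hfin : f (x₀, p₀) ≠ ⊤) (hmin : ∀ y, f (x₀, p₀) ≤ f (y, p₀))
    (huniq : ∀ x, (∀ y, f (x, p₀) ≤ f (y, p₀)) → x = x₀)
    (hlsc : LowerSemicontinuousOn f (univ ×ˢ s))
    (hcont : ContinuousWithinAt (fun p => f (x₀, p)) s p₀)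
    (hlb : ∀ c : ℝ, ∃ V ∈ 𝓝 p₀, ∃ Ω : Set X,
      Bornology.IsBounded Ω ∧ ∀ p ∈ V ∩ s, {x | f (x, p) ≤ (c : EReal)} ⊆ Ω)
    {l : Filter ι} {pk : ι → P} (hpk : Tendsto pk l (𝓝[s] p₀)) {xk : ι → X}
    (hxk : ∀ i, f (xk i, pk i) ≤ f (x₀, pk i)) : Tendsto xk l (𝓝 x₀) := by
  obtain ⟨c, hc, -⟩ := EReal.lt_iff_exists_real_btwn.1 (lt_top_iff_ne_top.2 hfin)
  obtain ⟨V, hV, Ω, hΩ, hsub⟩ := hlb c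
  have hval : Tendsto (fun i => f (x₀, pk i)) l (𝓝 (f (x₀, p₀))) := hcont.tendsto.comp hpk
  have hmemΩ : ∀ᶠ i in l, xk i ∈ Ω := by
    filter_upwards [hval.eventually_lt_const hc, hpk (inter_mem_nhdsWithin s hV)] with i hi hpi
    exact hsub (pk i) ⟨hpi.2, hpi.1⟩ ((hxk i).trans hi.le)
  refine hΩ.isCompact_closure.tendsto_nhds_of_unique_mapClusterPt
    (hmemΩ.mono fun _ h => subset_closure h) fun xb _ hxb => huniq xb fun y => ?_
  have hpair : MapClusterPt (xb, p₀) l (fun i => (xk i, pk i)) :=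
    hxb.prodMk (hpk.mono_right nhdsWithin_le_nhds)
  have hpair_mem : ∀ᶠ i in l, (xk i, pk i) ∈ univ ×ˢ s :=
    (tendsto_nhdsWithin_iff.1 hpk).2.mono fun _ hi => ⟨trivial, hi⟩
  exact (LowerSemicontinuousWithinAt.le_of_mapClusterPt (hlsc (xb, p₀) ⟨trivial, hp₀⟩) hpair
    hpair_mem (.of_forall hxk) hval).trans (hmin y)

end Stability

section CompObj

variable {N : ℕ} {Q : Type*} {F : EuclideanSpace ℝ (Fin N) → Q → ℝ}
  {R : EuclideanSpace ℝ (Fin N) → EReal}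

theorem compObj_ne_top_iff {x : EuclideanSpace ℝ (Fin N)} {p : Q} :
    compObj F R x p ≠ ⊤ ↔ R x ≠ ⊤ := by
  refine ⟨fun h hR => h (by rw [compObj, hR, EReal.coe_add_top]), fun h => ?_⟩
  exact (EReal.add_lt_top (EReal.coe_ne_top _) h).ne

theorem compObj_eq_coe {x : EuclideanSpace ℝ (Fin N)} {p : Q} (hbot : R x ≠ ⊥) (htop : R x ≠ ⊤) :
    compObj F R x p = ((F x p + (R x).toReal : ℝ) : EReal) := by
  rw [compObj, EReal.coe_add, EReal.coe_toReal htop hbot]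

theorem norm_sub_le_div_of_quadratic_growth_of_norm_gradient_sub_le
    {gF : EuclideanSpace ℝ (Fin N) → Q → EuclideanSpace ℝ (Fin N)}
    {s : Set (EuclideanSpace ℝ (Fin N))} {p q : Q} {x x' : EuclideanSpace ℝ (Fin N)} {κ C : ℝ}
    (hκ : 0 < κ) (hs : Convex ℝ s) (hx : x ∈ s) (hx' : x' ∈ s)
    (hRbot : R x ≠ ⊥) (hRbot' : R x' ≠ ⊥) (hRtop' : R x' ≠ ⊤)
    (hgradp : ∀ z ∈ s, HasGradientAt (fun y => F y p) (gF z p) z)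
    (hgradq : ∀ z ∈ s, HasGradientAt (fun y => F y q) (gF z q) z)
    (hgF : ∀ z ∈ s, ‖gF z p - gF z q‖ ≤ C)
    (hgrowth : compObj F R x' p + ((κ * ‖x - x'‖ ^ 2 : ℝ) : EReal) ≤ compObj F R x p)
    (hopt : compObj F R x q ≤ compObj F R x' q) : ‖x - x'‖ ≤ C / κ := by
  have hRtop : R x ≠ ⊤ :=
    compObj_ne_top_iff.1 (ne_top_of_le_ne_top (compObj_ne_top_iff.2 hRtop') hopt)
  rw [compObj_eq_coe hRbot' hRtop', compObj_eq_coe hRbot hRtop] at hgrowth hopt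
  refine norm_sub_le_div_of_quadratic_growth (φ₀ := fun z => F z p + (R z).toReal)
    (φ := fun z => F z q + (R z).toReal) hκ ((norm_nonneg _).trans (hgF x hx))
    (mod_cast hgrowth) (mod_cast hopt) ?_
  have hmvt := hs.norm_image_sub_le_of_norm_hasGradientAt_le
    (fun z hz => (hgradp z hz).sub (hgradq z hz)) hgF hx' hx
  convert hmvt using 2
  ring

end CompObj

theorem sensitivity_quadratic_growth_general
    {N : ℕ} {Q : Type*} [NormedAddCommGroup Q]
    (Pi : Set Q) (p₀ : Q) (hp₀ : p₀ ∈ Pi)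
    (F : EuclideanSpace ℝ (Fin N) → Q → ℝ)
    (gF : EuclideanSpace ℝ (Fin N) → Q → EuclideanSpace ℝ (Fin N))
    (hFgrad : ∀ p ∈ Pi, ∀ x, HasGradientAt (fun z => F z p) (gF x p) x)
    (R : EuclideanSpace ℝ (Fin N) → EReal) (hR : ProperConvexLsc R)
    -- (i) unique minimizer of `E(·,p₀)`
    (xstar : EuclideanSpace ℝ (Fin N))
    (hmin : ∀ x, compObj F R xstar p₀ ≤ compObj F R x p₀)
    (huniq : ∀ x', (∀ x, compObj F R x' p₀ ≤ compObj F R x p₀) → x' = xstar)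
    -- (ii) `E` lsc on `ℝ^N × Π`
    (hlsc : LowerSemicontinuousOn (fun q : EuclideanSpace ℝ (Fin N) × Q => compObj F R q.1 q.2)
      (Set.univ ×ˢ Pi))
    -- (iii) `E(x⋆(p₀),·)` continuous at `p₀`
    (hcont : ContinuousWithinAt (fun p => compObj F R xstar p) Pi p₀)
    -- (v) level-boundedness in `x` locally uniformly in `p` around `p₀`
    (hlb : ∀ c : ℝ, ∃ V ∈ 𝓝 p₀, ∃ Ω : Set (EuclideanSpace ℝ (Fin N)),
      Bornology.IsBounded Ω ∧ ∀ p ∈ V ∩ Pi, {x | compObj F R x p ≤ (c : EReal)} ⊆ Ω)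
    -- quadratic growth on a neighbourhood `V` of `x⋆(p₀)`
    (V : Set (EuclideanSpace ℝ (Fin N))) (hV : V ∈ 𝓝 xstar) (κ : ℝ) (hκ : 0 < κ)
    (hgrowth : ∀ x ∈ V,
      compObj F R xstar p₀ + ((κ * ‖x - xstar‖ ^ 2 : ℝ) : EReal) ≤ compObj F R x p₀)
    -- Lipschitz continuity of `∇F(x,·)` near `p₀`, uniformly in `x ∈ V`
    (ν : ℝ)
    (hlip : ∃ W ∈ 𝓝 p₀, ∀ x ∈ V, ∀ p ∈ W ∩ Pi, ∀ q ∈ W ∩ Pi,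
      ‖gF x p - gF x q‖ ≤ ν * ‖p - q‖) :
    ∀ pk : ℕ → Q, (∀ k, pk k ∈ Pi) → Tendsto pk atTop (𝓝 p₀) →
      ∀ xk : ℕ → EuclideanSpace ℝ (Fin N),
        (∀ k x, compObj F R (xk k) (pk k) ≤ compObj F R x (pk k)) →
        ∀ᶠ k in atTop,
          ‖xk k - xstar‖ ≤ ν / κ * ‖pk k - p₀‖ ∧
          Metric.infDist xstar
            {x | ∀ z, compObj F R x (pk k) ≤ compObj F R z (pk k)}
            ≤ ν / κ * ‖pk k - p₀‖ := by
  intro pk hpkPi hpk xk hxkmin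
  obtain ⟨⟨hRbot, x₁, hx₁⟩, -, -⟩ := hR
  have hRxstar : R xstar ≠ ⊤ :=
    compObj_ne_top_iff.1 (ne_top_of_le_ne_top (compObj_ne_top_iff.2 hx₁) (hmin x₁))
  have hconv : Tendsto xk atTop (𝓝 xstar) :=
    tendsto_of_unique_minimizer (f := fun q => compObj F R q.1 q.2) hp₀
      (compObj_ne_top_iff.2 hRxstar) hmin huniq hlsc hcont hlb
      (tendsto_nhdsWithin_iff.2 ⟨hpk, .of_forall hpkPi⟩) (fun k => hxkmin k xstar)
  obtain ⟨r, hr, hball⟩ := Metric.mem_nhds_iff.1 hV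
  obtain ⟨W, hW, hlipW⟩ := hlip
  filter_upwards [hconv.eventually_mem (Metric.ball_mem_nhds xstar hr), hpk.eventually_mem hW]
    with k hxk hpkW
  have hbound : ‖xk k - xstar‖ ≤ ν / κ * ‖pk k - p₀‖ := by
    rw [div_mul_eq_mul_div]
    refine norm_sub_le_div_of_quadratic_growth_of_norm_gradient_sub_le hκ (convex_ball xstar r)
      hxk (Metric.mem_ball_self hr) (hRbot _) (hRbot _) hRxstar (fun z _ => hFgrad p₀ hp₀ z)
      (fun z _ => hFgrad (pk k) (hpkPi k) z) (fun z hz => ?_) (hgrowth _ (hball hxk))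
      (hxkmin k xstar)
    rw [norm_sub_rev (pk k)]
    exact hlipW z (hball hz) p₀ ⟨mem_of_mem_nhds hW, hp₀⟩ (pk k) ⟨hpkW, hpkPi k⟩
  refine ⟨hbound, le_trans ?_ hbound⟩
  rw [← dist_eq_norm, dist_comm]
  exact Metric.infDist_le_dist_of_mem (hxkmin k)

/-- Remark 3.4, quadratic growth: under assumptions (i)-(v), a
quadratic growth condition at `x⋆(p₀)` and local Lipschitz continuity of `∇F(x,·)`
uniformly in `x`, minimizers for `p_k → p₀` satisfy, for `k` large,
`‖x⋆_k − x⋆(p₀)‖ ≤ (ν/κ)‖p_k − p₀‖`; in particular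
`d(x⋆(p₀), Argmin E(·,p_k)) ≤ (ν/κ)‖p_k − p₀‖`. -/
theorem sensitivity_quadratic_growth
    {N : ℕ} {Q : Type*} [NormedAddCommGroup Q] [NormedSpace ℝ Q] [FiniteDimensional ℝ Q]
    (Pi : Set Q) (hPi : IsOpen Pi) (p₀ : Q) (hp₀ : p₀ ∈ Pi)
    (F : EuclideanSpace ℝ (Fin N) → Q → ℝ)
    (gF : EuclideanSpace ℝ (Fin N) → Q → EuclideanSpace ℝ (Fin N))
    (hFconv : ∀ p ∈ Pi, ConvexOn ℝ Set.univ (fun x => F x p))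
    (hFgrad : ∀ p ∈ Pi, ∀ x, HasGradientAt (fun z => F z p) (gF x p) x)
    (R : EuclideanSpace ℝ (Fin N) → EReal) (hR : ProperConvexLsc R)
    -- (i) unique minimizer of `E(·,p₀)`
    (xstar : EuclideanSpace ℝ (Fin N))
    (hmin : ∀ x, compObj F R xstar p₀ ≤ compObj F R x p₀)
    (huniq : ∀ x', (∀ x, compObj F R x' p₀ ≤ compObj F R x p₀) → x' = xstar)
    -- (ii) `E` lsc on `ℝ^N × Π`
    (hlsc : LowerSemicontinuousOn (fun q : EuclideanSpace ℝ (Fin N) × Q => compObj F R q.1 q.2)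
      (Set.univ ×ˢ Pi))
    -- (iii) `E(x⋆(p₀),·)` continuous at `p₀`
    (hcont : ContinuousWithinAt (fun p => compObj F R xstar p) Pi p₀)
    -- (iv) `∇F` continuous at `(x⋆(p₀),p₀)`
    (hgcont : ContinuousWithinAt (fun q : EuclideanSpace ℝ (Fin N) × Q => gF q.1 q.2)
      (Set.univ ×ˢ Pi) (xstar, p₀))
    -- (v) level-boundedness in `x` locally uniformly in `p` around `p₀`
    (hlb : ∀ c : ℝ, ∃ V ∈ 𝓝 p₀, ∃ Ω : Set (EuclideanSpace ℝ (Fin N)),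
      Bornology.IsBounded Ω ∧ ∀ p ∈ V ∩ Pi, {x | compObj F R x p ≤ (c : EReal)} ⊆ Ω)
    -- quadratic growth on a neighbourhood `V` of `x⋆(p₀)`
    (V : Set (EuclideanSpace ℝ (Fin N))) (hV : V ∈ 𝓝 xstar) (κ : ℝ) (hκ : 0 < κ)
    (hgrowth : ∀ x ∈ V,
      compObj F R xstar p₀ + ((κ * ‖x - xstar‖ ^ 2 : ℝ) : EReal) ≤ compObj F R x p₀)
    -- Lipschitz continuity of `∇F(x,·)` near `p₀`, uniformly in `x ∈ V`
    (ν : ℝ) (hν : 0 ≤ ν)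
    (hlip : ∃ W ∈ 𝓝 p₀, ∀ x ∈ V, ∀ p ∈ W ∩ Pi, ∀ q ∈ W ∩ Pi,
      ‖gF x p - gF x q‖ ≤ ν * ‖p - q‖) :
    ∀ pk : ℕ → Q, (∀ k, pk k ∈ Pi) → Tendsto pk atTop (𝓝 p₀) →
      ∀ xk : ℕ → EuclideanSpace ℝ (Fin N),
        (∀ k x, compObj F R (xk k) (pk k) ≤ compObj F R x (pk k)) →
        ∀ᶠ k in atTop,
          ‖xk k - xstar‖ ≤ ν / κ * ‖pk k - p₀‖ ∧
          Metric.infDist xstar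
            {x | ∀ z, compObj F R x (pk k) ≤ compObj F R z (pk k)}
            ≤ ν / κ * ‖pk k - p₀‖ :=
  sensitivity_quadratic_growth_general Pi p₀ hp₀ F gF hFgrad R hR xstar hmin huniq hlsc hcont hlb V
    hV κ hκ hgrowth ν hlip

end
end
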